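/- arXiv:1506.02780 — 9 statements merged into one kernel-verified Lean document; each statement's English description precedes it below -/
import Mathlib

section
/- Let I(k) denote the set of 2k-diagrams d (Z2-stable equivalence relations on (Fin k ⊕ Fin k) × ZMod 2) such that every equivalence class of d has exactly two elements, one of the form (Sum.inl i, x) (top row) and one of the form (Sum.inr j, y) (bottom row). Then there is an explicit bijection between I(k) and (Fin k → ZMod 2) × Equiv.Perm (Fin k) (the underlying set of the wreath product Z2 ≀ S_k): to d one associates the permutation σ with σ(i) = j when the class of (Sum.inl i, 0) contains an element (Sum.inr j, y), and the function f with f(i) = 1 if (Sum.inl i, 0) ∼ (Sum.inr σ(i), 1) in d and f(i) = 0 if (Sum.inl i, 0) ∼ (Sum.inr σ(i), 0) in d. -/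
/-- An equivalence relation on `T × ZMod 2` is `ZMod 2`-stable if it is preserved by
the action `g·(t,x) = (t, g+x)`. -/
def IsStable {T : Type*} (d : Setoid (T × ZMod 2)) : Prop :=
  ∀ g : ZMod 2, ∀ p q : T × ZMod 2, d.r p q → d.r (p.1, g + p.2) (q.1, g + q.2)

/-- Every equivalence class of `d` has exactly two elements, one in the top row
(of the form `(Sum.inl i, x)`) and one in the bottom row (of the form
`(Sum.inr j, y)`). -/
def PairMatching (k : ℕ) (d : Setoid ((Fin k ⊕ Fin k) × ZMod 2)) : Prop :=
  ∀ p : (Fin k ⊕ Fin k) × ZMod 2, ∃ i : Fin k, ∃ x : ZMod 2, ∃ j : Fin k, ∃ y : ZMod 2,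
    ∀ q, d.r q p ↔ q = (Sum.inl i, x) ∨ q = (Sum.inr j, y)

namespace Stmt3Aux

variable {k : ℕ}

/-- Canonical form map associated to `(f, σ)`. -/
def F (f : Fin k → ZMod 2) (σ : Equiv.Perm (Fin k)) :
    (Fin k ⊕ Fin k) × ZMod 2 → Fin k × ZMod 2
  | (Sum.inl i, x) => (i, x)
  | (Sum.inr j, y) => (σ.symm j, y - f (σ.symm j))

lemma F_shift (f : Fin k → ZMod 2) (σ : Equiv.Perm (Fin k)) (g : ZMod 2)
    (p : (Fin k ⊕ Fin k) × ZMod 2) :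
    F f σ (p.1, g + p.2) = ((F f σ p).1, g + (F f σ p).2) := by
  obtain ⟨(i | j), x⟩ := p <;> simp [F, add_sub_assoc]

lemma back_stable (f : Fin k → ZMod 2) (σ : Equiv.Perm (Fin k)) :
    IsStable (Setoid.ker (F f σ)) := by
  intro g p q h
  show F f σ _ = F f σ _
  rw [F_shift, F_shift]
  have h' : F f σ p = F f σ q := h
  rw [h']

lemma back_pm (f : Fin k → ZMod 2) (σ : Equiv.Perm (Fin k)) :
    PairMatching k (Setoid.ker (F f σ)) := by
  intro p
  refine ⟨(F f σ p).1, (F f σ p).2, σ (F f σ p).1, (F f σ p).2 + f (F f σ p).1, ?_⟩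
  intro q
  constructor
  · intro h
    have h' : F f σ q = F f σ p := h
    obtain ⟨(i | j), x⟩ := q
    · left
      rw [← h']
      rfl
    · right
      rw [← h']
      show _ = (Sum.inr (σ (σ.symm j)), (x - f (σ.symm j)) + f (σ.symm j))
      simp
  · rintro (rfl | rfl)
    · show F f σ _ = F f σ p
      simp [F]
    · show F f σ _ = F f σ p
      simp [F]

variable {d : Setoid ((Fin k ⊕ Fin k) × ZMod 2)}

lemma top_unique (hpm : PairMatching k d) {a b : Fin k} {x z : ZMod 2}
    (h : d.r (Sum.inl a, x) (Sum.inl b, z)) : a = b ∧ x = z := by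
  obtain ⟨i', x', j, y, spec⟩ := hpm (Sum.inl b, z)
  have hb := (spec _).mp (d.refl (Sum.inl b, z))
  have ha := (spec _).mp h
  rcases hb with hb | hb
  · rcases ha with ha | ha
    · have := ha.trans hb.symm
      simpa [Prod.ext_iff] using this
    · simp [Prod.ext_iff] at ha
  · simp [Prod.ext_iff] at hb

lemma exu (hpm : PairMatching k d) (i : Fin k) :
    ∃! jy : Fin k × ZMod 2, d.r (Sum.inl i, 0) (Sum.inr jy.1, jy.2) := by
  obtain ⟨i', x', j, y, spec⟩ := hpm (Sum.inl i, 0)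
  refine ⟨(j, y), d.symm ((spec _).mpr (Or.inr rfl)), ?_⟩
  rintro ⟨j₁, y₁⟩ h
  have := (spec _).mp (d.symm h)
  rcases this with h' | h'
  · simp [Prod.ext_iff] at h'
  · simpa [Prod.ext_iff] using h'

noncomputable def bo (hpm : PairMatching k d) (i : Fin k) : Fin k × ZMod 2 :=
  (exu hpm i).exists.choose

lemma bo_spec (hpm : PairMatching k d) (i : Fin k) :
    d.r (Sum.inl i, 0) (Sum.inr (bo hpm i).1, (bo hpm i).2) :=
  (exu hpm i).exists.choose_spec

lemma bo_unique (hpm : PairMatching k d) {i j : Fin k} {y : ZMod 2}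
    (h : d.r (Sum.inl i, 0) (Sum.inr j, y)) : (j, y) = bo hpm i :=
  (exu hpm i).unique h (bo_spec hpm i)

lemma bo_inj (hst : IsStable d) (hpm : PairMatching k d) :
    Function.Injective (fun i => (bo hpm i).1) := by
  intro a b hab
  simp only at hab
  have h1 : d.r (Sum.inl a, ((bo hpm b).2 - (bo hpm a).2) + 0)
      (Sum.inr (bo hpm a).1, ((bo hpm b).2 - (bo hpm a).2) + (bo hpm a).2) :=
    hst _ _ _ (bo_spec hpm a)
  rw [hab, sub_add_cancel] at h1
  have h2 := d.trans h1 (d.symm (bo_spec hpm b))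
  exact (top_unique hpm h2).1

noncomputable def sigma (hst : IsStable d) (hpm : PairMatching k d) : Equiv.Perm (Fin k) :=
  Equiv.ofBijective _ (Finite.injective_iff_bijective.mp (bo_inj hst hpm))

lemma sigma_apply (hst : IsStable d) (hpm : PairMatching k d) (i : Fin k) :
    sigma hst hpm i = (bo hpm i).1 := rfl

lemma repr_lemma (hst : IsStable d) (hpm : PairMatching k d)
    (p : (Fin k ⊕ Fin k) × ZMod 2) :
    d.r p (Sum.inl (F (fun i => (bo hpm i).2) (sigma hst hpm) p).1,
          (F (fun i => (bo hpm i).2) (sigma hst hpm) p).2) := by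
  set σ := sigma hst hpm with hσ
  obtain ⟨(i | j), y⟩ := p
  · exact d.refl _
  · set i := σ.symm j with hi
    have hji : (bo hpm i).1 = j := by
      have := σ.apply_symm_apply j
      rwa [← hi, sigma_apply] at this
    have h1 : d.r (Sum.inl i, (y - (bo hpm i).2) + 0)
        (Sum.inr (bo hpm i).1, (y - (bo hpm i).2) + (bo hpm i).2) :=
      hst _ _ _ (bo_spec hpm i)
    rw [hji, sub_add_cancel, add_zero] at h1
    exact d.symm h1

lemma char (hst : IsStable d) (hpm : PairMatching k d)
    (p q : (Fin k ⊕ Fin k) × ZMod 2) :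
    d.r p q ↔ F (fun i => (bo hpm i).2) (sigma hst hpm) p
            = F (fun i => (bo hpm i).2) (sigma hst hpm) q := by
  constructor
  · intro h
    have h2 := d.trans (d.symm (repr_lemma hst hpm p)) (d.trans h (repr_lemma hst hpm q))
    obtain ⟨h3, h4⟩ := top_unique hpm h2
    exact Prod.ext h3 h4
  · intro h
    have h2 := repr_lemma hst hpm q
    rw [← h] at h2
    exact d.trans (repr_lemma hst hpm p) (d.symm h2)

noncomputable def Phi :
    {d : Setoid ((Fin k ⊕ Fin k) × ZMod 2) // IsStable d ∧ PairMatching k d} ≃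
      (Fin k → ZMod 2) × Equiv.Perm (Fin k) where
  toFun d := (fun i => (bo d.2.2 i).2, sigma d.2.1 d.2.2)
  invFun fs := ⟨Setoid.ker (F fs.1 fs.2), back_stable fs.1 fs.2, back_pm fs.1 fs.2⟩
  left_inv d := by
    apply Subtype.ext
    exact (Setoid.ext (char d.2.1 d.2.2)).symm
  right_inv fs := by
    obtain ⟨f, σ⟩ := fs
    have key : ∀ i, bo (back_pm f σ) i = (σ i, f i) := by
      intro i
      refine (bo_unique (back_pm f σ) ?_).symm
      show F f σ _ = F f σ _
      simp [F]
    simp only [Prod.mk.injEq]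
    constructor
    · funext i
      exact congrArg Prod.snd (key i)
    · apply Equiv.ext
      intro i
      rw [sigma_apply]
      exact congrArg Prod.fst (key i)

end Stmt3Aux

/-- The set `I(k)` of `ZMod 2`-stable equivalence relations on
`(Fin k ⊕ Fin k) × ZMod 2` all of whose classes consist of exactly one top-row and
one bottom-row element is in explicit bijection `Φ` with
`(Fin k → ZMod 2) × Equiv.Perm (Fin k)` (the underlying set of `ZMod 2 ≀ S_k`),
where `Φ d = (f, σ)` is characterized by `(Sum.inl i, 0) ∼ (Sum.inr (σ i), f i)`
in `d` for all `i`. -/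
theorem stmt_3 (k : ℕ) :
    ∃ Φ : {d : Setoid ((Fin k ⊕ Fin k) × ZMod 2) // IsStable d ∧ PairMatching k d} ≃
        (Fin k → ZMod 2) × Equiv.Perm (Fin k),
      ∀ d : {d : Setoid ((Fin k ⊕ Fin k) × ZMod 2) // IsStable d ∧ PairMatching k d},
        ∀ i : Fin k,
          d.val.r (Sum.inl i, 0) (Sum.inr ((Φ d).2 i), (Φ d).1 i) := by
  exact ⟨Stmt3Aux.Phi, fun d i => Stmt3Aux.bo_spec d.2.2 i⟩
end

section
/- Let I(k) denote the set of 2k-diagrams d such that every equivalence class of d has exactly two elements, one in the top row and one in the bottom row, and let Φ : I(k) → (Fin k → ZMod 2) × Equiv.Perm (Fin k) be the bijection d ↦ (f, σ) defined by σ(i) = j when the class of (Sum.inl i, 0) contains an element (Sum.inr j, y), and f(i) = 1 iff (Sum.inl i, 0) ∼ (Sum.inr σ(i), 1) in d. Then Φ transports diagram composition to the multiplication of the semidirect product (Fin k → ZMod 2) ⋊ Equiv.Perm (Fin k) (where Equiv.Perm (Fin k) acts by permuting coordinates); that is, I(k) is a group under diagram composition isomorphic to the hyperoctahedral group Z2 ≀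 S_k. -/
/-- Inclusion of the first diagram's rows into `α ⊕ β ⊕ γ`. -/
def ins1 {α β γ : Type*} : α ⊕ β → α ⊕ β ⊕ γ :=
  Sum.elim Sum.inl (fun b => Sum.inr (Sum.inl b))

/-- Inclusion of the second diagram's rows into `α ⊕ β ⊕ γ`. -/
def ins2 {α β γ : Type*} : β ⊕ γ → α ⊕ β ⊕ γ :=
  Sum.elim (fun b => Sum.inr (Sum.inl b)) (fun c => Sum.inr (Sum.inr c))

/-- Inclusion of the outer rows into `α ⊕ β ⊕ γ`. -/
def ins3 {α β γ : Type*} : α ⊕ γ → α ⊕ β ⊕ γ :=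
  Sum.elim Sum.inl (fun c => Sum.inr (Sum.inr c))

/-- The smallest equivalence relation on `(α ⊕ β ⊕ γ) × ZMod 2` containing the
images of `d1` and `d2` under the natural inclusions. -/
def joinRel {α β γ : Type*} (d1 : Setoid ((α ⊕ β) × ZMod 2))
    (d2 : Setoid ((β ⊕ γ) × ZMod 2)) : Setoid ((α ⊕ β ⊕ γ) × ZMod 2) :=
  Relation.EqvGen.setoid (fun p q =>
    (∃ p' q' : (α ⊕ β) × ZMod 2, d1.r p' q' ∧
      p = (ins1 p'.1, p'.2) ∧ q = (ins1 q'.1, q'.2)) ∨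
    (∃ p' q' : (β ⊕ γ) × ZMod 2, d2.r p' q' ∧
      p = (ins2 p'.1, p'.2) ∧ q = (ins2 q'.1, q'.2)))

/-- Diagram composition: restrict the join of `d1` and `d2` to `(α ⊕ γ) × ZMod 2`. -/
def diagComp {α β γ : Type*} (d1 : Setoid ((α ⊕ β) × ZMod 2))
    (d2 : Setoid ((β ⊕ γ) × ZMod 2)) : Setoid ((α ⊕ γ) × ZMod 2) :=
  Setoid.comap (fun p => (ins3 p.1, p.2)) (joinRel d1 d2)

def proj {k : ℕ} (σ : Equiv.Perm (Fin k)) (f : Fin k → ZMod 2) :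
    (Fin k ⊕ Fin k) × ZMod 2 → Fin k × ZMod 2
  | (Sum.inl i, x) => (i, x)
  | (Sum.inr j, y) => (σ.symm j, y + f (σ.symm j))

lemma proj_char {k : ℕ} {d : Setoid ((Fin k ⊕ Fin k) × ZMod 2)} (hs : IsStable d)
    (hm : PairMatching k d) (σ : Equiv.Perm (Fin k)) (f : Fin k → ZMod 2)
    (h : ∀ i, d.r (Sum.inl i, 0) (Sum.inr (σ i), f i)) :
    ∀ p q, d.r p q ↔ proj σ f p = proj σ f q := by
  have hzm : ∀ a b : ZMod 2, a + b + b = a := by decide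
  -- step A
  have hA : ∀ (i : Fin k) (x : ZMod 2), d.r (Sum.inl i, x) (Sum.inr (σ i), x + f i) := by
    intro i x
    have := hs x _ _ (h i)
    simpa using this
  -- step B
  have hB : ∀ p, d.r (Sum.inl (proj σ f p).1, (proj σ f p).2) p := by
    rintro ⟨a | j, y⟩
    · exact d.refl _
    · have := hA (σ.symm j) (y + f (σ.symm j))
      simpa [proj, hzm] using this
  -- step C
  have hC : ∀ (a b : Fin k) (x y : ZMod 2), d.r (Sum.inl a, x) (Sum.inl b, y) →
      a = b ∧ x = y := by
    intro a b x y hr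
    obtain ⟨i', x', j', y', hq⟩ := hm (Sum.inl b, y)
    have h1 := (hq (Sum.inl b, y)).mp (d.refl _)
    have h2 := (hq (Sum.inl a, x)).mp hr
    rcases h1 with h1 | h1 <;> rcases h2 with h2 | h2 <;>
      simp_all
  intro p q
  constructor
  · intro hr
    have h1 : d.r (Sum.inl (proj σ f p).1, (proj σ f p).2)
        (Sum.inl (proj σ f q).1, (proj σ f q).2) :=
      d.trans (d.trans (hB p) hr) (d.symm (hB q))
    obtain ⟨h1, h2⟩ := hC _ _ _ _ h1
    exact Prod.ext h1 h2
  · intro he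
    have h1 := hB p
    rw [he] at h1
    exact d.trans (d.symm h1) (hB q)

def proj3 {k : ℕ} (σ1 σ2 : Equiv.Perm (Fin k)) (f1 f2 : Fin k → ZMod 2) :
    (Fin k ⊕ Fin k ⊕ Fin k) × ZMod 2 → Fin k × ZMod 2
  | (Sum.inl i, x) => (i, x)
  | (Sum.inr (Sum.inl b), y) => (σ1.symm b, y + f1 (σ1.symm b))
  | (Sum.inr (Sum.inr c), z) =>
      (σ1.symm (σ2.symm c), z + f2 (σ2.symm c) + f1 (σ1.symm (σ2.symm c)))

lemma join_char {k : ℕ} {d1 d2 : Setoid ((Fin k ⊕ Fin k) × ZMod 2)}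
    (σ1 σ2 : Equiv.Perm (Fin k)) (f1 f2 : Fin k → ZMod 2)
    (h1 : ∀ p q, d1.r p q ↔ proj σ1 f1 p = proj σ1 f1 q)
    (h2 : ∀ p q, d2.r p q ↔ proj σ2 f2 p = proj σ2 f2 q) :
    ∀ p q, (joinRel d1 d2).r p q ↔ proj3 σ1 σ2 f1 f2 p = proj3 σ1 σ2 f1 f2 q := by
  have hzm : ∀ a b : ZMod 2, a + b + b = a := by decide
  set P3 := proj3 σ1 σ2 f1 f2 with hP3
  -- compatibility of generators with P3
  have compat1 : ∀ p' : (Fin k ⊕ Fin k) × ZMod 2,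
      P3 (ins1 p'.1, p'.2) = proj σ1 f1 p' := by
    rintro ⟨a | b, x⟩ <;> rfl
  have compat2 : ∀ p' : (Fin k ⊕ Fin k) × ZMod 2,
      P3 (ins2 p'.1, p'.2) =
        (σ1.symm (proj σ2 f2 p').1, (proj σ2 f2 p').2 + f1 (σ1.symm (proj σ2 f2 p').1)) := by
    rintro ⟨b | c, x⟩ <;> rfl
  -- backward: every point is joinRel-related to its canonical top element
  have hback : ∀ p, (joinRel d1 d2).r (Sum.inl (P3 p).1, (P3 p).2) p := by
    have mid : ∀ (b : Fin k) (y : ZMod 2),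
        (joinRel d1 d2).r (Sum.inl (σ1.symm b), y + f1 (σ1.symm b))
          (Sum.inr (Sum.inl b), y) := by
      intro b y
      apply Relation.EqvGen.rel
      left
      refine ⟨(Sum.inl (σ1.symm b), y + f1 (σ1.symm b)), (Sum.inr b, y), ?_, rfl, rfl⟩
      rw [h1]
      simp [proj]
    rintro ⟨a | (b | c), y⟩
    · exact (joinRel d1 d2).refl _
    · exact mid b y
    · have step2 : (joinRel d1 d2).r (Sum.inr (Sum.inl (σ2.symm c)), y + f2 (σ2.symm c))
          (Sum.inr (Sum.inr c), y) := by
        apply Relation.EqvGen.rel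
        right
        refine ⟨(Sum.inl (σ2.symm c), y + f2 (σ2.symm c)), (Sum.inr c, y), ?_, rfl, rfl⟩
        rw [h2]
        simp [proj]
      exact (joinRel d1 d2).trans (mid (σ2.symm c) (y + f2 (σ2.symm c))) step2
  intro p q
  constructor
  · intro hr
    induction hr with
    | rel p q hpq =>
        rcases hpq with ⟨p', q', hd, hp, hq⟩ | ⟨p', q', hd, hp, hq⟩
        · rw [hp, hq, compat1, compat1, ← h1]; exact hd
        · rw [hp, hq, compat2, compat2]
          rw [h2] at hd
          rw [hd]
    | refl p => rfl
    | symm _ _ _ ih => exact ih.symm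
    | trans _ _ _ _ _ ih1 ih2 => exact ih1.trans ih2
  · intro he
    have hp := hback p
    rw [he] at hp
    exact (joinRel d1 d2).trans ((joinRel d1 d2).symm hp) (hback q)

/-- the bijection `Φ` of Statement 3 transports diagram composition to
the multiplication of the semidirect product
`(Fin k → ZMod 2) ⋊ Equiv.Perm (Fin k)` (permutations acting by permuting
coordinates): the composite of two diagrams in `I(k)` again lies in `I(k)`, and
`Φ (d1 ∘ d2) = ((f1 + f2 ∘ σ1), σ2 * σ1)` where `Φ d1 = (f1, σ1)`,
`Φ d2 = (f2, σ2)`.  In particular `I(k)` is a group under diagram composition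
isomorphic to the hyperoctahedral group `ZMod 2 ≀ S_k`. -/
theorem stmt_4 (k : ℕ)
    (Φ : {d : Setoid ((Fin k ⊕ Fin k) × ZMod 2) // IsStable d ∧ PairMatching k d} ≃
        (Fin k → ZMod 2) × Equiv.Perm (Fin k))
    (hΦ : ∀ d : {d : Setoid ((Fin k ⊕ Fin k) × ZMod 2) // IsStable d ∧ PairMatching k d},
      ∀ i : Fin k, d.val.r (Sum.inl i, 0) (Sum.inr ((Φ d).2 i), (Φ d).1 i))
    (d1 d2 : {d : Setoid ((Fin k ⊕ Fin k) × ZMod 2) // IsStable d ∧ PairMatching k d}) :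
    ∃ h : IsStable (diagComp d1.val d2.val) ∧ PairMatching k (diagComp d1.val d2.val),
      Φ ⟨diagComp d1.val d2.val, h⟩ =
        ((fun i => (Φ d1).1 i + (Φ d2).1 ((Φ d1).2 i)), (Φ d2).2 * (Φ d1).2) := by
  have hzm : ∀ a b : ZMod 2, a + b + b = a := by decide
  set f1 := (Φ d1).1 with hf1
  set σ1 := (Φ d1).2 with hσ1
  set f2 := (Φ d2).1 with hf2
  set σ2 := (Φ d2).2 with hσ2
  have h1 := proj_char d1.2.1 d1.2.2 σ1 f1 (hΦ d1)
  have h2 := proj_char d2.2.1 d2.2.2 σ2 f2 (hΦ d2)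
  have hj := join_char σ1 σ2 f1 f2 h1 h2
  -- characterization of the composite via ρ
  set ρ : (Fin k ⊕ Fin k) × ZMod 2 → Fin k × ZMod 2 :=
    fun p => proj3 σ1 σ2 f1 f2 (ins3 p.1, p.2) with hρ
  have hcomp : ∀ p q, (diagComp d1.val d2.val).r p q ↔ ρ p = ρ q := by
    intro p q
    exact hj (ins3 p.1, p.2) (ins3 q.1, q.2)
  have hρl : ∀ (i : Fin k) (x : ZMod 2), ρ (Sum.inl i, x) = (i, x) := fun _ _ => rfl
  have hρr : ∀ (c : Fin k) (z : ZMod 2), ρ (Sum.inr c, z) =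
      (σ1.symm (σ2.symm c), z + f2 (σ2.symm c) + f1 (σ1.symm (σ2.symm c))) :=
    fun _ _ => rfl
  -- stability
  have hstab : IsStable (diagComp d1.val d2.val) := by
    intro g p q hr
    rw [hcomp] at hr ⊢
    have key : ∀ r : (Fin k ⊕ Fin k) × ZMod 2,
        ρ (r.1, g + r.2) = ((ρ r).1, g + (ρ r).2) := by
      rintro ⟨a | c, z⟩
      · rfl
      · rw [hρr, hρr]
        simp [add_assoc]
    rw [key p, key q, hr]
  -- pair matching
  have hmatch : PairMatching k (diagComp d1.val d2.val) := by
    intro p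
    refine ⟨(ρ p).1, (ρ p).2, σ2 (σ1 (ρ p).1), (ρ p).2 + f1 (ρ p).1 + f2 (σ1 (ρ p).1), ?_⟩
    intro q
    rw [hcomp]
    have hval : ρ (Sum.inr (σ2 (σ1 (ρ p).1)), (ρ p).2 + f1 (ρ p).1 + f2 (σ1 (ρ p).1))
        = ρ p := by
      rw [hρr]
      simp only [Equiv.symm_apply_apply]
      have : ∀ a b c : ZMod 2, a + b + c + c + b = a := by decide
      exact Prod.ext rfl (this _ _ _)
    constructor
    · intro he
      rcases q with ⟨a | c, z⟩
      · left
        rw [hρl] at he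
        rw [← he]
      · right
        rw [hρr] at he
        have hc : σ1.symm (σ2.symm c) = (ρ p).1 := congrArg Prod.fst he
        have hcc : c = σ2 (σ1 (ρ p).1) := by
          rw [← hc]; simp
        subst hcc
        have hz : z + f2 (σ1 (ρ p).1) + f1 (ρ p).1 = (ρ p).2 := by
          have := congrArg Prod.snd he
          simpa using this
        have hzz : z = (ρ p).2 + f1 (ρ p).1 + f2 (σ1 (ρ p).1) := by
          have : ∀ z a b w : ZMod 2, z + a + b = w → z = w + b + a := by decide
          exact this _ _ _ _ hz
        rw [hzz]
    · rintro (rfl | rfl)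
      · rw [hρl]
      · exact hval
  refine ⟨⟨hstab, hmatch⟩, ?_⟩
  -- identify Φ of the composite
  set c : {d : Setoid ((Fin k ⊕ Fin k) × ZMod 2) // IsStable d ∧ PairMatching k d} :=
    ⟨diagComp d1.val d2.val, hstab, hmatch⟩ with hc
  have hrel := hΦ c
  have key : ∀ i : Fin k, (Φ c).2 i = σ2 (σ1 i) ∧ (Φ c).1 i = f1 i + f2 (σ1 i) := by
    intro i
    have := (hcomp _ _).mp (hrel i)
    rw [hρl, hρr] at this
    have hi : σ1.symm (σ2.symm ((Φ c).2 i)) = i := (congrArg Prod.fst this).symm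
    rw [Equiv.symm_apply_eq, Equiv.symm_apply_eq] at hi
    have hji : (Φ c).2 i = σ2 (σ1 i) := hi
    refine ⟨hji, ?_⟩
    have hv := (congrArg Prod.snd this).symm
    simp only at hv
    rw [hji] at hv
    simp only [Equiv.symm_apply_apply] at hv
    have : ∀ u a b : ZMod 2, u + a + b = 0 → u = b + a := by decide
    exact this _ _ _ hv
  have hfst : (Φ c).1 = fun i => f1 i + f2 (σ1 i) := funext fun i => (key i).2
  have hsnd : (Φ c).2 = σ2 * σ1 := Equiv.ext fun i => (key i).1
  exact Prod.ext hfst hsnd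
end

section
/- For every m ≥ 1, the number of Z2-stable equivalence relations d on Fin m × ZMod 2 whose induced relation R^d on Fin m is the full (one-class) relation equals 2^(m-1) + 1. -/
private lemma z2_add_self : ∀ a : ZMod 2, a + a = 0 := by decide

private lemma z2_cases : ∀ a : ZMod 2, a = 0 ∨ a = 1 := by decide

private lemma z2_ne : ∀ a b : ZMod 2, a ≠ b → a + b = 1 := by decide

private def fullS (α : Type*) : Setoid α :=
  ⟨fun _ _ => True, ⟨fun _ => trivial, fun _ => trivial, fun _ _ => trivial⟩⟩

private def sRel {n : ℕ} (F : Fin (n + 1) → ZMod 2) : Setoid (Fin (n + 1) × ZMod 2) :=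
  ⟨fun p q => p.2 + F p.1 = q.2 + F q.1, ⟨fun _ => rfl, Eq.symm, Eq.trans⟩⟩

private def Fc {n : ℕ} (f : Fin n → ZMod 2) : Fin (n + 1) → ZMod 2 :=
  Fin.cons 0 f

private lemma Fc_zero {n : ℕ} (f : Fin n → ZMod 2) : Fc f 0 = 0 := rfl

private lemma Fc_succ {n : ℕ} (f : Fin n → ZMod 2) (i : Fin n) : Fc f i.succ = f i :=
  Fin.cons_succ _ _ _

private def G {n : ℕ} (o : Option (Fin n → ZMod 2)) :
    {d : Setoid (Fin (n + 1) × ZMod 2) // IsStable d ∧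
      ∀ i j : Fin (n + 1), ∃ x y : ZMod 2, d.r (i, x) (j, y)} :=
  match o with
  | none => ⟨fullS _, fun _ _ _ _ => trivial, fun _ _ => ⟨0, 0, trivial⟩⟩
  | some f => ⟨sRel (Fc f),
      fun g p q h => by
        show (g + p.2) + _ = (g + q.2) + _
        rw [add_assoc, add_assoc]
        exact congrArg (g + ·) h,
      fun i j => ⟨Fc f i, Fc f j,
        (z2_add_self (Fc f i)).trans (z2_add_self (Fc f j)).symm⟩⟩

private lemma G_none_val {n : ℕ} : (G (n := n) none).1 = fullS _ := rfl

private lemma G_some_val {n : ℕ} (f : Fin n → ZMod 2) : (G (some f)).1 = sRel (Fc f) := rfl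

private lemma G_inj {n : ℕ} : Function.Injective (G (n := n)) := by
  intro o1 o2 h
  have h' : (G o1).1 = (G o2).1 := congrArg Subtype.val h
  match o1, o2 with
  | none, none => rfl
  | none, some f =>
    exfalso
    rw [G_none_val, G_some_val] at h'
    have h2 : (sRel (Fc f)).r (0, 0) (0, 1) := h' ▸ trivial
    have h3 : (0 : ZMod 2) + Fc f 0 = 1 + Fc f 0 := h2
    simp at h3
  | some f, none =>
    exfalso
    rw [G_none_val, G_some_val] at h'
    have h2 : (sRel (Fc f)).r (0, 0) (0, 1) := h'.symm ▸ trivial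
    have h3 : (0 : ZMod 2) + Fc f 0 = 1 + Fc f 0 := h2
    simp at h3
  | some f, some f' =>
    congr 1
    funext i
    rw [G_some_val, G_some_val] at h'
    have h2 : (sRel (Fc f)).r (i.succ, f i) (0, 0) := by
      show f i + Fc f i.succ = 0 + Fc f 0
      rw [Fc_succ, Fc_zero, z2_add_self, add_zero]
    rw [h'] at h2
    have h3 : f i + Fc f' i.succ = (0 : ZMod 2) + Fc f' 0 := h2
    rw [Fc_succ, Fc_zero, add_zero] at h3
    by_contra hne
    have h1 := z2_ne (f i) (f' i) hne
    rw [h3] at h1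
    exact absurd h1 (by decide)

private lemma G_surj {n : ℕ} : Function.Surjective (G (n := n)) := by
  rintro ⟨d, hst, hfull⟩
  have h1 : ∀ i : Fin (n + 1), ∃ e : ZMod 2, d.r (i, 0) (0, e) := by
    intro i
    obtain ⟨x, y, hxy⟩ := hfull i 0
    have h2 : d.r (i, x + x) (0, x + y) := hst x (i, x) (0, y) hxy
    rw [z2_add_self] at h2
    exact ⟨x + y, h2⟩
  choose F hF using h1
  by_cases hr : d.r (0, 0) (0, 1)
  · -- d is the full relation
    have key : ∀ p : Fin (n + 1) × ZMod 2, d.r p (0, 0) := by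
      intro p
      have h2 : d.r (p.1, p.2 + 0) (0, p.2 + F p.1) := hst p.2 (p.1, 0) (0, F p.1) (hF p.1)
      rw [add_zero] at h2
      rcases z2_cases (p.2 + F p.1) with h | h
      · rw [h] at h2; exact h2
      · rw [h] at h2; exact d.trans h2 (d.symm hr)
    have hde : fullS (Fin (n + 1) × ZMod 2) = d := by
      apply Setoid.ext
      intro p q
      exact ⟨fun _ => d.trans (key p) (d.symm (key q)), fun _ => trivial⟩
    exact ⟨none, Subtype.ext (G_none_val.trans hde)⟩
  · -- d is determined by F
    have hF0 : F 0 = 0 := by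
      rcases z2_cases (F 0) with h | h
      · exact h
      · exact absurd (h ▸ hF 0) hr
    have key : ∀ p : Fin (n + 1) × ZMod 2, d.r p (0, p.2 + F p.1) := by
      intro p
      have h2 : d.r (p.1, p.2 + 0) (0, p.2 + F p.1) := hst p.2 (p.1, 0) (0, F p.1) (hF p.1)
      rw [add_zero] at h2
      exact h2
    have hde : sRel F = d := by
      apply Setoid.ext
      intro p q
      show p.2 + F p.1 = q.2 + F q.1 ↔ _
      constructor
      · intro h
        exact d.trans (key p) (h ▸ d.symm (key q))
      · intro h
        have h3 : d.r (0, p.2 + F p.1) (0, q.2 + F q.1) :=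
          d.trans (d.symm (key p)) (d.trans h (key q))
        by_contra hne
        have h4 : d.r (0, (p.2 + F p.1) + (p.2 + F p.1)) (0, (p.2 + F p.1) + (q.2 + F q.1)) :=
          hst (p.2 + F p.1) (0, p.2 + F p.1) (0, q.2 + F q.1) h3
        rw [z2_add_self, z2_ne _ _ hne] at h4
        exact hr h4
    have hFc : Fc (fun i => F i.succ) = F := by
      funext i
      refine Fin.cases ?_ ?_ i
      · rw [Fc_zero, hF0]
      · intro k; rw [Fc_succ]
    refine ⟨some (fun i => F i.succ), Subtype.ext ?_⟩
    rw [G_some_val, hFc]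
    exact hde

/-- for `m ≥ 1`, the number of `ZMod 2`-stable equivalence relations on
`Fin m × ZMod 2` whose induced relation on `Fin m` is the full (one-class)
relation equals `2^(m-1) + 1`. -/
theorem stmt_5 (m : ℕ) (hm : 1 ≤ m) :
    Nat.card {d : Setoid (Fin m × ZMod 2) // IsStable d ∧
      ∀ i j : Fin m, ∃ x y : ZMod 2, d.r (i, x) (j, y)} = 2 ^ (m - 1) + 1 := by
  obtain ⟨n, rfl⟩ : ∃ n, m = n + 1 := ⟨m - 1, (Nat.succ_pred_eq_of_pos hm).symm⟩
  rw [← Nat.card_eq_of_bijective _ ⟨G_inj, G_surj⟩]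
  simp [Nat.card_eq_fintype_card]
end

section
/- Let π be an equivalence relation on Fin m with equivalence classes B_1, …, B_t. Then the number of Z2-stable equivalence relations d on Fin m × ZMod 2 whose induced relation R^d equals π is the product over i = 1, …, t of (2^(|B_i| - 1) + 1). -/
open scoped CharTwo

theorem ZMod.eq_zero_or_eq_one (w : ZMod 2) : w = 0 ∨ w = 1 := by
  revert w; decide

theorem Setoid.coe_quotientEquivClasses {T : Type*} (π : Setoid T) (q : Quotient π) :
    (π.quotientEquivClasses q : Set T) = {i | Quotient.mk π i = q} := by
  induction q using Quotient.inductionOn with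
  | h a => ext i; simp [Quotient.eq]

theorem Setoid.card_mk_eq_and_ne_out {T : Type*} [Finite T] (π : Setoid T) (q : Quotient π) :
    Nat.card {i // Quotient.mk π i = q ∧ i ≠ q.out} =
      (π.quotientEquivClasses q : Set T).ncard - 1 := by
  rw [π.coe_quotientEquivClasses, ← Set.ncard_sdiff_singleton_of_mem
    (show q.out ∈ {i | Quotient.mk π i = q} from Quotient.out_eq q), ← Nat.card_coe_set_eq]
  rfl

namespace IsStable

variable {T : Type*} {d : Setoid (T × ZMod 2)}

theorem rel_add_iff (hd : IsStable d) (g : ZMod 2) {i j : T} {x y : ZMod 2} :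
    d.r (i, g + x) (j, g + y) ↔ d.r (i, x) (j, y) :=
  ⟨fun h => by simpa using hd g _ _ h, hd g (i, x) (j, y)⟩

theorem rel_iff_rel_zero (hd : IsStable d) {i j : T} {x y : ZMod 2} :
    d.r (i, x) (j, y) ↔ d.r (i, 0) (j, x + y) := by
  rw [← hd.rel_add_iff x, CharTwo.add_self_eq_zero]

theorem rel_self_of_rel_zero_one (hd : IsStable d) {r : T} (hr : d.r (r, 0) (r, 1))
    (x y : ZMod 2) : d.r (r, x) (r, y) := by
  rw [hd.rel_iff_rel_zero]
  rcases ZMod.eq_zero_or_eq_one (x + y) with h | h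
  · rw [h]
  · rwa [h]

theorem rel_self_iff (hd : IsStable d) {r : T} (hr : ¬ d.r (r, 0) (r, 1)) {x y : ZMod 2} :
    d.r (r, x) (r, y) ↔ x = y := by
  rw [hd.rel_iff_rel_zero, ← CharTwo.add_eq_zero]
  rcases ZMod.eq_zero_or_eq_one (x + y) with h | h <;> rw [h]
  exacts [iff_of_true (d.refl' _) rfl, iff_of_false hr one_ne_zero]

theorem rel_iff_of_rel_zero (hd : IsStable d) {r i : T} {z : ZMod 2} (hz : d.r (r, 0) (i, z))
    (x : ZMod 2) (p : T × ZMod 2) : d.r (i, x) p ↔ d.r (r, x + z) p := by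
  have h : d.r (r, x + z) (i, x) := by simpa using hd (x + z) _ _ hz
  exact ⟨d.trans' h, d.trans' (d.symm' h)⟩

variable {r i j : T} {zi zj : ZMod 2}

theorem rel_of_rel_zero_one (hd : IsStable d) (hr : d.r (r, 0) (r, 1))
    (hi : d.r (r, 0) (i, zi)) (hj : d.r (r, 0) (j, zj)) (x y : ZMod 2) :
    d.r (i, x) (j, y) := by
  rw [hd.rel_iff_of_rel_zero hi, d.comm', hd.rel_iff_of_rel_zero hj]
  exact hd.rel_self_of_rel_zero_one hr _ _

theorem rel_iff_of_not_rel_zero_one (hd : IsStable d) (hr : ¬ d.r (r, 0) (r, 1))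
    (hi : d.r (r, 0) (i, zi)) (hj : d.r (r, 0) (j, zj)) {x y : ZMod 2} :
    d.r (i, x) (j, y) ↔ x + zi = y + zj := by
  rw [hd.rel_iff_of_rel_zero hi, d.comm', hd.rel_iff_of_rel_zero hj, hd.rel_self_iff hr,
    eq_comm]

theorem exists_rel_zero (hd : IsStable d) {π : Setoid T}
    (hπ : ∀ i j : T, (∃ x y : ZMod 2, d.r (i, x) (j, y)) ↔ π.r i j) (h : π.r i j) :
    ∃ z, d.r (i, 0) (j, z) := by
  obtain ⟨x, y, hxy⟩ := (hπ i j).mpr h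
  exact ⟨x + y, hd.rel_iff_rel_zero.mp hxy⟩

end IsStable

section StableLift

variable {T : Type*} (π : Setoid T)

/-- A stable `d` inducing `π` is encoded class by class: `none` when the fibre over the class
`q` is a single class of `d`, and otherwise the offsets `ε i` for which `(i, x)` is related to
`(q.out, x + ε i)`, the offset of the representative `q.out` being normalised to `0`. -/
def StableLiftData : Type _ :=
  ∀ q : Quotient π, Option ({i // Quotient.mk π i = q ∧ i ≠ q.out} → ZMod 2)

namespace StableLiftData

variable {π}

open scoped Classical in
noncomputable def offset (f : StableLiftData π) (i : T) : ZMod 2 :=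
  (f (Quotient.mk π i)).elim 0 fun ε =>
    if h : i = (Quotient.mk π i).out then 0 else ε ⟨i, rfl, h⟩

theorem offset_of_eq_some {f : StableLiftData π} {q : Quotient π} {ε} (hf : f q = some ε)
    {i : T} (hi : Quotient.mk π i = q ∧ i ≠ q.out) : f.offset i = ε ⟨i, hi⟩ := by
  obtain ⟨rfl, hi'⟩ := hi
  simp [offset, hf, hi']

theorem offset_out (f : StableLiftData π) (q : Quotient π) : f.offset q.out = 0 := by
  rcases hf : f (Quotient.mk π q.out) with _ | ε <;> simp [offset, hf, Quotient.out_eq]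

def toSetoid (f : StableLiftData π) : Setoid (T × ZMod 2) where
  r p p' := π.r p.1 p'.1 ∧
    (f (Quotient.mk π p.1) = none ∨ p.2 + f.offset p.1 = p'.2 + f.offset p'.1)
  iseqv := by
    refine ⟨fun p => ⟨π.refl' _, Or.inr rfl⟩, ?_, ?_⟩
    · rintro p p' ⟨h, hc | he⟩
      · exact ⟨π.symm' h, Or.inl (Quotient.sound (π.symm' h) ▸ hc)⟩
      · exact ⟨π.symm' h, Or.inr he.symm⟩
    · rintro p p' p'' ⟨h, hc | he⟩ ⟨h', hc' | he'⟩
      · exact ⟨π.trans' h h', Or.inl hc⟩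
      · exact ⟨π.trans' h h', Or.inl hc⟩
      · exact ⟨π.trans' h h', Or.inl (Quotient.sound h ▸ hc')⟩
      · exact ⟨π.trans' h h', Or.inr (he.trans he')⟩

theorem toSetoid_r {f : StableLiftData π} {p p' : T × ZMod 2} :
    f.toSetoid.r p p' ↔ π.r p.1 p'.1 ∧
      (f (Quotient.mk π p.1) = none ∨ p.2 + f.offset p.1 = p'.2 + f.offset p'.1) :=
  Iff.rfl

theorem toSetoid_out_zero_one_iff (f : StableLiftData π) (q : Quotient π) :
    f.toSetoid.r (q.out, 0) (q.out, 1) ↔ f q = none := by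
  rw [toSetoid_r, Quotient.out_eq]
  simp [offset_out]

theorem isStable_toSetoid (f : StableLiftData π) : IsStable f.toSetoid := by
  rintro g ⟨i, x⟩ ⟨j, y⟩ ⟨h, hc | he⟩
  · exact ⟨h, Or.inl hc⟩
  · refine ⟨h, Or.inr ?_⟩
    simp only [add_assoc, he]

theorem exists_toSetoid_iff (f : StableLiftData π) (i j : T) :
    (∃ x y : ZMod 2, f.toSetoid.r (i, x) (j, y)) ↔ π.r i j :=
  ⟨fun ⟨_, _, h, _⟩ => h, fun h => ⟨f.offset j, f.offset i, h, Or.inr (add_comm _ _)⟩⟩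

open scoped Classical in
noncomputable def ofSetoid (d : Setoid (T × ZMod 2)) : StableLiftData π := fun q =>
  if d.r (q.out, 0) (q.out, 1) then none
  else some fun i => if d.r (q.out, 0) (i.1, 0) then 0 else 1

theorem ofSetoid_toSetoid (f : StableLiftData π) : ofSetoid f.toSetoid = f := by
  funext q
  rcases hf : f q with _ | ε
  · simp [ofSetoid, (f.toSetoid_out_zero_one_iff q).mpr hf]
  · have hq : ¬ f.toSetoid.r (q.out, 0) (q.out, 1) := by simp [toSetoid_out_zero_one_iff, hf]
    simp only [ofSetoid, if_neg hq, Option.some.injEq]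
    funext ⟨i, hiq, hi⟩
    have hrel : f.toSetoid.r (q.out, 0) (i, 0) ↔ ε ⟨i, hiq, hi⟩ = 0 := by
      rw [toSetoid_r, Quotient.out_eq, hf]
      simp [offset_out, offset_of_eq_some hf ⟨hiq, hi⟩, eq_comm,
        Quotient.exact ((Quotient.out_eq q).trans hiq.symm)]
    rcases ZMod.eq_zero_or_eq_one (ε ⟨i, hiq, hi⟩) with h | h <;> simp [hrel, h]

section

variable {d : Setoid (T × ZMod 2)} (hd : IsStable d)
  (hπ : ∀ i j : T, (∃ x y : ZMod 2, d.r (i, x) (j, y)) ↔ π.r i j)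
include hd hπ

theorem rel_out_offset_ofSetoid {q : Quotient π} {i : T} (hiq : Quotient.mk π i = q)
    (hq : ¬ d.r (q.out, 0) (q.out, 1)) :
    d.r (q.out, 0) (i, (ofSetoid d : StableLiftData π).offset i) := by
  classical
  by_cases hi : i = q.out
  · subst hi
    rw [offset_out]
  rw [offset_of_eq_some (if_neg hq) ⟨hiq, hi⟩]
  split_ifs with h0
  · exact h0
  obtain ⟨z, hz⟩ := hd.exists_rel_zero hπ (Quotient.exact ((Quotient.out_eq q).trans hiq.symm))
  rcases ZMod.eq_zero_or_eq_one z with rfl | rfl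
  exacts [absurd hz h0, hz]

theorem toSetoid_ofSetoid : (ofSetoid d : StableLiftData π).toSetoid = d := by
  ext ⟨i, x⟩ ⟨j, y⟩
  rw [toSetoid_r]
  by_cases hij : π.r i j
  swap
  · exact iff_of_false (fun h => hij h.1) (fun h => hij ((hπ i j).mp ⟨x, y, h⟩))
  set q := Quotient.mk π i with hq
  have hjq : Quotient.mk π j = q := (Quotient.sound hij).symm
  by_cases hr : d.r (q.out, 0) (q.out, 1)
  · obtain ⟨zi, hzi⟩ := hd.exists_rel_zero hπ (Quotient.mk_out i)
    obtain ⟨zj, hzj⟩ :=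
      hd.exists_rel_zero hπ (Quotient.exact ((Quotient.out_eq q).trans hjq.symm))
    exact iff_of_true ⟨hij, Or.inl (if_pos hr)⟩ (hd.rel_of_rel_zero_one hr hzi hzj x y)
  · rw [hd.rel_iff_of_not_rel_zero_one hr (rel_out_offset_ofSetoid hd hπ hq.symm hr)
      (rel_out_offset_ofSetoid hd hπ hjq hr)]
    simp [hij, ofSetoid, hr]

end

end StableLiftData

noncomputable def stableLiftEquiv :
    {d : Setoid (T × ZMod 2) // IsStable d ∧
      ∀ i j : T, (∃ x y : ZMod 2, d.r (i, x) (j, y)) ↔ π.r i j} ≃ StableLiftData π where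
  toFun d := StableLiftData.ofSetoid d.1
  invFun f := ⟨f.toSetoid, f.isStable_toSetoid, f.exists_toSetoid_iff⟩
  left_inv d := Subtype.ext (StableLiftData.toSetoid_ofSetoid d.2.1 d.2.2)
  right_inv := StableLiftData.ofSetoid_toSetoid

theorem card_stableLiftData [Finite T] :
    Nat.card (StableLiftData π) =
      ∏ B ∈ (Set.toFinite π.classes).toFinset, (2 ^ (B.ncard - 1) + 1) := by
  have : Fintype (Quotient π) := Fintype.ofFinite _
  have : Fintype π.classes := Fintype.ofFinite _
  rw [StableLiftData, Nat.card_pi,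
    Finset.prod_subtype _ (fun B => Set.Finite.mem_toFinset _)
      fun B : Set T => 2 ^ (B.ncard - 1) + 1]
  refine Fintype.prod_equiv π.quotientEquivClasses _ _ fun q => ?_
  rw [Finite.card_option, Nat.card_fun, Nat.card_zmod, π.card_mk_eq_and_ne_out]

end StableLift

/-- given an equivalence relation `π` on `Fin m`, the number of
`ZMod 2`-stable equivalence relations `d` on `Fin m × ZMod 2` whose induced
relation `R^d` (given by `i R^d j ↔ ∃ x y, (i,x) ∼ (j,y)`) equals `π` is the
product, over the equivalence classes `B` of `π`, of `2^(|B|-1) + 1`. -/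
theorem stmt_6 (m : ℕ) (π : Setoid (Fin m)) :
    Nat.card {d : Setoid (Fin m × ZMod 2) // IsStable d ∧
      ∀ i j : Fin m, (∃ x y : ZMod 2, d.r (i, x) (j, y)) ↔ π.r i j} =
      ∏ B ∈ (Set.toFinite π.classes).toFinset, (2 ^ (B.ncard - 1) + 1) := by
  rw [Nat.card_congr (stableLiftEquiv π), card_stableLiftData]
end

section
/- For every m ≥ 1, the total number of Z2-stable equivalence relations on Fin m × ZMod 2 equals the sum, over all equivalence relations π on Fin m, of the product over the equivalence classes B of π of (2^(|B| - 1) + 1). (Taking m = 2k, this is the dimension of the algebra of Z2-relations A_k^{Z2}(x), and the sum can be rewritten as Σ_{λ ⊢ 2k} n_λ Π_i (2^(λ_i - 1) + 1), where n_λ is the number of set partitions of [2k] with block sizes λ_1, …, λ_t.) -/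
theorem Nat.card_fun_apply_eq {α β : Type*} [Finite α] (a : α) (b : β) :
    Nat.card {f : α → β // f a = b} = Nat.card β ^ (Nat.card α - 1) := by
  classical
  have e : {f : α → β // f a = b} ≃ {x : β // x = b} × ({j // j ≠ a} → β) :=
    ((Equiv.funSplitAt a β).subtypeEquiv (p := fun f => f a = b) fun _ => Iff.rfl).trans
      Equiv.prodSubtypeFstEquivSubtypeProd
  have hα : Nat.card α = Nat.card {j // j ≠ a} + 1 := by
    rw [← Finite.card_option, Nat.card_congr (Equiv.optionSubtypeNe a)]
  rw [Nat.card_congr e, Nat.card_prod, Nat.card_unique, one_mul, Nat.card_fun, hα,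
    Nat.add_sub_cancel]

instance Setoid.instFinite {α : Type*} [Finite α] : Finite (Setoid α) :=
  Finite.of_injective _ fun _ _ => Setoid.eq_iff_rel_eq.mpr

namespace IsStable

variable {T : Type*} {d : Setoid (T × ZMod 2)}

theorem rel_shift (hd : IsStable d) {t t' : T} {x y : ZMod 2} (h : d (t, x) (t', y))
    (x' : ZMod 2) : d (t, x') (t', x' - x + y) := by
  simpa using hd (x' - x) _ _ h

def shadow (hd : IsStable d) : Setoid T where
  r t t' := ∃ x y, d (t, x) (t', y)
  iseqv :=
    { refl _ := ⟨0, 0, d.refl' _⟩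
      symm := fun ⟨x, y, h⟩ => ⟨y, x, d.symm' h⟩
      trans := fun ⟨x, y, h⟩ ⟨y', z, h'⟩ => ⟨x, y - y' + z, d.trans' h (hd.rel_shift h' y)⟩ }

end IsStable

section Connected

variable {S : Type*}

def IsShadowConnected (d : Setoid (S × ZMod 2)) : Prop :=
  ∀ s s' : S, ∃ x y, d (s, x) (s', y)

def graphSetoid (f : S → ZMod 2) : Setoid (S × ZMod 2) :=
  Setoid.ker fun p => p.2 - f p.1

@[simp]
theorem graphSetoid_apply (f : S → ZMod 2) (p q : S × ZMod 2) :
    graphSetoid f p q ↔ p.2 - f p.1 = q.2 - f q.1 :=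
  Iff.rfl

theorem isStable_graphSetoid (f : S → ZMod 2) : IsStable (graphSetoid f) := by
  intro g p q h
  rw [graphSetoid_apply] at h ⊢
  rw [add_sub_assoc, add_sub_assoc, h]

theorem isShadowConnected_graphSetoid (f : S → ZMod 2) : IsShadowConnected (graphSetoid f) :=
  fun s s' => ⟨f s, f s', by simp⟩

theorem isStable_top : IsStable (⊤ : Setoid (S × ZMod 2)) := fun _ _ _ _ => trivial

theorem isShadowConnected_top : IsShadowConnected (⊤ : Setoid (S × ZMod 2)) :=
  fun _ _ => ⟨0, 0, trivial⟩

theorem graphSetoid_ne_top [Nonempty S] (f : S → ZMod 2) : graphSetoid f ≠ ⊤ := by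
  intro h
  obtain ⟨s⟩ := ‹Nonempty S›
  have : graphSetoid f (s, 0) (s, 1) := h ▸ trivial
  exact zero_ne_one (sub_left_inj.mp this)

theorem graphSetoid_injOn (s₀ : S) : Set.InjOn graphSetoid {f : S → ZMod 2 | f s₀ = 0} := by
  intro f hf g hg h
  funext t
  have : graphSetoid g (s₀, 0) (t, f t) := h ▸ by simp [hf.out]
  simpa [hg.out, eq_comm, sub_eq_zero] using this

theorem IsStable.eq_top_or_eq_graphSetoid {d : Setoid (S × ZMod 2)} (hd : IsStable d)
    (hc : IsShadowConnected d) (s₀ : S) : d = ⊤ ∨ ∃ f, f s₀ = 0 ∧ d = graphSetoid f := by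
  have hbase : ∀ t, ∃ y, d (s₀, 0) (t, y) := fun t =>
    let ⟨_, _, h⟩ := hc s₀ t; ⟨_, hd.rel_shift h 0⟩
  choose f hf using hbase
  have hlift : ∀ p : S × ZMod 2, d (s₀, p.2 - f p.1) p := by
    rintro ⟨t, x⟩
    simpa using hd.rel_shift (hf t) (x - f t)
  by_cases h01 : d (s₀, 0) (s₀, 1)
  · left
    have hfiber : ∀ a b, d (s₀, a) (s₀, b) := by
      intro a b
      obtain rfl | rfl : b = a ∨ b = a - 0 + 1 := by revert a b; decide
      exacts [d.refl' _, hd.rel_shift h01 a]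
    ext p q
    exact iff_of_true (d.trans' (d.symm' (hlift p)) (d.trans' (hfiber _ _) (hlift q))) trivial
  · right
    have hfiber : ∀ a b, d (s₀, a) (s₀, b) → a = b := by
      have hne : ∀ a b : ZMod 2, a ≠ b → 0 - a + b = 1 := by decide
      intro a b h
      by_contra hab
      exact h01 (hne a b hab ▸ hd.rel_shift h 0)
    refine ⟨f, (hfiber _ _ (hf s₀)).symm, ?_⟩
    ext p q
    exact ⟨fun h => hfiber _ _ (d.trans' (hlift p) (d.trans' h (d.symm' (hlift q)))),
      fun h => d.trans' (d.symm' (hlift p)) ((graphSetoid_apply f p q).mp h ▸ hlift q)⟩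

theorem card_isStable_isShadowConnected [Finite S] [Nonempty S] :
    Nat.card {d : Setoid (S × ZMod 2) // IsStable d ∧ IsShadowConnected d} =
      2 ^ (Nat.card S - 1) + 1 := by
  obtain ⟨s₀⟩ := ‹Nonempty S›
  let F : Option {f : S → ZMod 2 // f s₀ = 0} →
      {d : Setoid (S × ZMod 2) // IsStable d ∧ IsShadowConnected d} := fun o =>
    o.elim ⟨⊤, isStable_top, isShadowConnected_top⟩
      fun f => ⟨graphSetoid f.1, isStable_graphSetoid f.1, isShadowConnected_graphSetoid f.1⟩
  have hF : F.Bijective := by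
    refine ⟨?_, ?_⟩
    · rintro (_ | ⟨f, hf⟩) (_ | ⟨g, hg⟩) h
      · rfl
      · exact absurd (congrArg Subtype.val h).symm (graphSetoid_ne_top g)
      · exact absurd (congrArg Subtype.val h) (graphSetoid_ne_top f)
      · simpa using graphSetoid_injOn s₀ hf hg (congrArg Subtype.val h)
    · rintro ⟨d, hd, hc⟩
      obtain rfl | ⟨f, hf, rfl⟩ := hd.eq_top_or_eq_graphSetoid hc s₀
      exacts [⟨none, rfl⟩, ⟨some ⟨f, hf⟩, rfl⟩]
  rw [← Nat.card_eq_of_bijective F hF, Finite.card_option, Nat.card_fun_apply_eq, Nat.card_zmod]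

end Connected

section Fiber

variable {S T : Type*}

theorem IsStable.comap_prodMap {d : Setoid (T × ZMod 2)} (hd : IsStable d) (f : S → T) :
    IsStable (d.comap (Prod.map f id)) :=
  fun g p q h => hd g (f p.1, p.2) (f q.1, q.2) h

theorem IsStable.isShadowConnected_comap {d : Setoid (T × ZMod 2)} (hd : IsStable d)
    {B : Set T} (hB : B ∈ hd.shadow.classes) :
    IsShadowConnected (d.comap (Prod.map ((↑) : B → T) id)) :=
  fun s s' => hd.shadow.rel_iff_exists_classes.mpr ⟨B, hB, s.2, s'.2⟩

def glueOnClasses (π : Setoid T) (e : ∀ B : π.classes, Setoid (B.1 × ZMod 2)) :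
    Setoid (T × ZMod 2) where
  r p q := ∃ (B : π.classes) (hp : p.1 ∈ B.1) (hq : q.1 ∈ B.1),
    e B (⟨p.1, hp⟩, p.2) (⟨q.1, hq⟩, q.2)
  iseqv :=
    { refl p := ⟨⟨_, π.mem_classes p.1⟩, π.refl' p.1, π.refl' p.1, (e _).refl' _⟩
      symm := fun ⟨B, hp, hq, h⟩ => ⟨B, hq, hp, (e B).symm' h⟩
      trans := by
        rintro p q r ⟨B, hp, hq, h⟩ ⟨B', hq', hr, h'⟩
        obtain rfl : B = B' := Subtype.ext (Setoid.eq_of_mem_classes B.2 hq B'.2 hq')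
        exact ⟨B, hp, hr, (e B).trans' h h'⟩ }

theorem isStable_glueOnClasses (π : Setoid T) (e : ∀ B : π.classes, Setoid (B.1 × ZMod 2))
    (he : ∀ B, IsStable (e B)) : IsStable (glueOnClasses π e) :=
  fun g _ _ ⟨B, hp, hq, h⟩ => ⟨B, hp, hq, he B g _ _ h⟩

noncomputable def shadowFiberEquiv (π : Setoid T) :
    {d : {d : Setoid (T × ZMod 2) // IsStable d} // d.2.shadow = π} ≃
      ∀ B : π.classes, {e : Setoid (B.1 × ZMod 2) // IsStable e ∧ IsShadowConnected e} where
  toFun d B := ⟨d.1.1.comap (Prod.map (↑) id), d.1.2.comap_prodMap _,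
    d.1.2.isShadowConnected_comap (d.2.symm ▸ B.2)⟩
  invFun e := by
    refine ⟨⟨glueOnClasses π fun B => (e B).1, isStable_glueOnClasses π _ fun B => (e B).2.1⟩, ?_⟩
    ext t t'
    constructor
    · rintro ⟨_, _, B, ht, ht', -⟩
      exact π.rel_iff_exists_classes.mpr ⟨B, B.2, ht, ht'⟩
    · intro h
      let B : π.classes := ⟨_, π.mem_classes t'⟩
      obtain ⟨x, y, hxy⟩ := (e B).2.2 ⟨t, h⟩ ⟨t', π.refl' t'⟩
      exact ⟨x, y, B, h, π.refl' t', hxy⟩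
  left_inv := by
    rintro ⟨⟨d, hd⟩, rfl⟩
    ext ⟨t, x⟩ ⟨t', y⟩
    refine ⟨fun ⟨_, _, _, h⟩ => h, fun h => ?_⟩
    exact ⟨⟨_, hd.shadow.mem_classes t'⟩, ⟨x, y, h⟩, hd.shadow.refl' t', h⟩
  right_inv := by
    intro e
    funext B
    ext ⟨⟨t, ht⟩, x⟩ ⟨⟨t', ht'⟩, y⟩
    refine ⟨fun ⟨B', h1, _, h⟩ => ?_, fun h => ⟨B, ht, ht', h⟩⟩
    obtain rfl : B' = B := Subtype.ext (Setoid.eq_of_mem_classes B'.2 h1 B.2 ht)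
    exact h

end Fiber

section Count

variable {T : Type*} [Finite T]

theorem card_shadow_fiber (π : Setoid T) :
    Nat.card {d : {d : Setoid (T × ZMod 2) // IsStable d} // d.2.shadow = π} =
      ∏ B ∈ (Set.toFinite π.classes).toFinset, (2 ^ (B.ncard - 1) + 1) := by
  have := Fintype.ofFinite π.classes
  rw [Nat.card_congr (shadowFiberEquiv π), Nat.card_pi, Set.Finite.toFinset_eq_toFinset,
    ← Finset.prod_set_coe]
  refine Finset.prod_congr rfl fun B _ => ?_
  have : Nonempty B.1 :=
    (Setoid.nonempty_of_mem_partition (Setoid.isPartition_classes π) B.2).to_subtype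
  rw [card_isStable_isShadowConnected, Nat.card_coe_set_eq]

theorem card_isStable_eq_finsum :
    Nat.card {d : Setoid (T × ZMod 2) // IsStable d} =
      ∑ᶠ π : Setoid T, ∏ B ∈ (Set.toFinite π.classes).toFinset, (2 ^ (B.ncard - 1) + 1) := by
  have := Fintype.ofFinite (Setoid T)
  rw [finsum_eq_sum_of_fintype, ← Finset.sum_congr rfl fun π _ => card_shadow_fiber π,
    ← Nat.card_sigma, Nat.card_congr (Equiv.sigmaFiberEquiv _)]

end Count

theorem stmt_7_general (m : ℕ) :
    Nat.card {d : Setoid (Fin m × ZMod 2) // IsStable d} =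
      ∑ᶠ π : Setoid (Fin m),
        ∏ B ∈ (Set.toFinite π.classes).toFinset, (2 ^ (B.ncard - 1) + 1) :=
  card_isStable_eq_finsum

/-- for `m ≥ 1`, the total number of `ZMod 2`-stable equivalence
relations on `Fin m × ZMod 2` (for `m = 2k`, the dimension of the algebra of
`ZMod 2`-relations `A_k^{Z2}(x)`) equals the sum, over all equivalence relations
`π` on `Fin m`, of the product over the equivalence classes `B` of `π` of
`2^(|B|-1) + 1`. -/
theorem stmt_7 (m : ℕ) (hm : 1 ≤ m) :
    Nat.card {d : Setoid (Fin m × ZMod 2) // IsStable d} =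
      ∑ᶠ π : Setoid (Fin m),
        ∏ B ∈ (Set.toFinite π.classes).toFinset, (2 ^ (B.ncard - 1) + 1) :=
  stmt_7_general m
end

section
/- Let A, B, C be finite types, let d1 be a Z2-stable equivalence relation on (A ⊕ B) × ZMod 2 and let d2 be a Z2-stable equivalence relation on (B ⊕ C) × ZMod 2. Then the composite d1 ∘ d2 is a Z2-stable equivalence relation on (A ⊕ C) × ZMod 2. (This is the diagrammatic content of the claim that the linear span of the Z2-stable equivalence relations is a subalgebra of the partition algebra.) -/
theorem joinRel_stable {α β γ : Type*} (d1 : Setoid ((α ⊕ β) × ZMod 2))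
    (d2 : Setoid ((β ⊕ γ) × ZMod 2)) (h1 : IsStable d1) (h2 : IsStable d2) :
    IsStable (joinRel d1 d2) := by
  intro g p q h
  induction h with
  | rel x y hxy =>
    apply Relation.EqvGen.rel
    rcases hxy with ⟨p', q', hd, hp, hq⟩ | ⟨p', q', hd, hp, hq⟩
    · exact Or.inl ⟨(p'.1, g + p'.2), (q'.1, g + q'.2), h1 g p' q' hd,
        by simp [hp], by simp [hq]⟩
    · exact Or.inr ⟨(p'.1, g + p'.2), (q'.1, g + q'.2), h2 g p' q' hd,
        by simp [hp], by simp [hq]⟩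
  | refl x => exact Relation.EqvGen.refl _
  | symm x y _ ih => exact Relation.EqvGen.symm _ _ ih
  | trans x y z _ _ ih1 ih2 => exact Relation.EqvGen.trans _ _ _ ih1 ih2

/-- the composite of two `ZMod 2`-stable equivalence relations is again
a `ZMod 2`-stable equivalence relation. -/
theorem stmt_8 {α β γ : Type*} [Finite α] [Finite β] [Finite γ]
    (d1 : Setoid ((α ⊕ β) × ZMod 2)) (d2 : Setoid ((β ⊕ γ) × ZMod 2))
    (h1 : IsStable d1) (h2 : IsStable d2) :
    IsStable (diagComp d1 d2) := by
  intro g p q h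
  exact joinRel_stable d1 d2 h1 h2 g (ins3 p.1, p.2) (ins3 q.1, q.2) h
end

section
/- Let A, B, C be finite types, let d1 be an equivalence relation on (A ⊕ B) × ZMod 2 and d2 an equivalence relation on (B ⊕ C) × ZMod 2. Then the number of through classes of the composite d1 ∘ d2 (equivalence classes on (A ⊕ C) × ZMod 2 meeting both A × ZMod 2 and C × ZMod 2) is at most the number of through classes of d1 (classes meeting both A × ZMod 2 and B × ZMod 2) and at most the number of through classes of d2 (classes meeting both B × ZMod 2 and C × ZMod 2). In particular, the propagating number does not increase under diagram composition: ♯^p(μν) ≤ min(♯^p(μ), ♯^p(ν)). -/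
section Aux

variable {α β γ : Type*} (d1 : Setoid ((α ⊕ β) × ZMod 2)) (d2 : Setoid ((β ⊕ γ) × ZMod 2))

/-- The generating relation of `joinRel`. -/
abbrev genRel : (α ⊕ β ⊕ γ) × ZMod 2 → (α ⊕ β ⊕ γ) × ZMod 2 → Prop := fun p q =>
    (∃ p' q' : (α ⊕ β) × ZMod 2, d1.r p' q' ∧
      p = (ins1 p'.1, p'.2) ∧ q = (ins1 q'.1, q'.2)) ∨
    (∃ p' q' : (β ⊕ γ) × ZMod 2, d2.r p' q' ∧
      p = (ins2 p'.1, p'.2) ∧ q = (ins2 q'.1, q'.2))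

lemma joinRel_r_iff {p q : (α ⊕ β ⊕ γ) × ZMod 2} :
    (joinRel d1 d2).r p q ↔ Relation.EqvGen (genRel d1 d2) p q := Iff.rfl

/-- `p` is in the `α` part. -/
def inA (p : (α ⊕ β ⊕ γ) × ZMod 2) : Prop := ∃ a, p.1 = Sum.inl a
/-- `p` is in the `γ` part. -/
def inC (p : (α ⊕ β ⊕ γ) × ZMod 2) : Prop := ∃ c, p.1 = Sum.inr (Sum.inr c)

/-- a `d1`-bridge reachable from `p`. -/
def B1 (p : (α ⊕ β ⊕ γ) × ZMod 2) : Prop :=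
  ∃ (a : α) (x : ZMod 2) (b : β) (y : ZMod 2), d1.r (Sum.inl a, x) (Sum.inr b, y) ∧
    Relation.EqvGen (genRel d1 d2) p (Sum.inl a, x)

/-- a `d2`-bridge reachable from `p`. -/
def B2 (p : (α ⊕ β ⊕ γ) × ZMod 2) : Prop :=
  ∃ (b : β) (x : ZMod 2) (c : γ) (y : ZMod 2), d2.r (Sum.inl b, x) (Sum.inr c, y) ∧
    Relation.EqvGen (genRel d1 d2) p (Sum.inr (Sum.inr c), y)

lemma B1_trans {p q : (α ⊕ β ⊕ γ) × ZMod 2} (h : Relation.EqvGen (genRel d1 d2) p q)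
    (hb : B1 d1 d2 q) : B1 d1 d2 p := by
  obtain ⟨a, x, b, y, h1, h2⟩ := hb
  exact ⟨a, x, b, y, h1, h.trans _ _ _ h2⟩

lemma B2_trans {p q : (α ⊕ β ⊕ γ) × ZMod 2} (h : Relation.EqvGen (genRel d1 d2) p q)
    (hb : B2 d1 d2 q) : B2 d1 d2 p := by
  obtain ⟨b, x, c, y, h1, h2⟩ := hb
  exact ⟨b, x, c, y, h1, h.trans _ _ _ h2⟩

lemma key {p q : (α ⊕ β ⊕ γ) × ZMod 2} (h : Relation.EqvGen (genRel d1 d2) p q) :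
    ((inA p ↔ ¬ inA q) → B1 d1 d2 p) ∧ ((inC p ↔ ¬ inC q) → B2 d1 d2 p) := by
  induction h with
  | rel p q hg =>
    rcases hg with ⟨⟨u, x⟩, ⟨v, y⟩, hd, hp, hq⟩ | ⟨⟨u, x⟩, ⟨v, y⟩, hd, hp, hq⟩
    · subst hp; subst hq
      constructor
      · intro hiff
        rcases u with a | b
        · rcases v with a' | b'
          · exact absurd hiff (by simp [inA, ins1])
          · exact ⟨a, x, b', y, hd, Relation.EqvGen.refl _⟩
        · rcases v with a' | b'
          · refine ⟨a', y, b, x, d1.symm' hd, ?_⟩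
            exact Relation.EqvGen.rel _ _ (Or.inl ⟨(Sum.inr b, x), (Sum.inl a', y), hd, rfl, rfl⟩)
          · exact absurd hiff (by simp [inA, ins1])
      · intro hiff
        exact absurd hiff (by rcases u with a | b <;> rcases v with a' | b' <;>
          simp [inC, ins1])
    · subst hp; subst hq
      constructor
      · intro hiff
        exact absurd hiff (by rcases u with b | c <;> rcases v with b' | c' <;>
          simp [inA, ins2])
      · intro hiff
        rcases u with b | c
        · rcases v with b' | c'
          · exact absurd hiff (by simp [inC, ins2])
          · exact ⟨b, x, c', y, hd, Relation.EqvGen.rel _ _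
              (Or.inr ⟨(Sum.inl b, x), (Sum.inr c', y), hd, rfl, rfl⟩)⟩
        · rcases v with b' | c'
          · exact ⟨b', y, c, x, d2.symm' hd, Relation.EqvGen.refl _⟩
          · exact absurd hiff (by simp [inC, ins2])
  | refl p =>
    exact ⟨fun hiff => absurd hiff (iff_not_self), fun hiff => absurd hiff (iff_not_self)⟩
  | symm p q hpq ih =>
    refine ⟨fun hiff => ?_, fun hiff => ?_⟩
    · exact B1_trans d1 d2 (hpq.symm _ _) (ih.1 (iff_not_comm.mp hiff))
    · exact B2_trans d1 d2 (hpq.symm _ _) (ih.2 (iff_not_comm.mp hiff))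
  | trans p q r hpq hqr ih1 ih2 =>
    constructor
    · intro hiff
      by_cases hq : inA q
      · by_cases hp : inA p
        · exact B1_trans d1 d2 hpq (ih2.1 (iff_of_true hq (hiff.mp hp)))
        · exact ih1.1 (iff_of_false hp (not_not_intro hq))
      · by_cases hp : inA p
        · exact ih1.1 (iff_of_true hp hq)
        · have hr : inA r := by
            by_contra hr
            exact hp (hiff.mpr hr)
          exact B1_trans d1 d2 hpq (ih2.1 (iff_of_false hq (not_not_intro hr)))
    · intro hiff
      by_cases hq : inC q
      · by_cases hp : inC p
        · exact B2_trans d1 d2 hpq (ih2.2 (iff_of_true hq (hiff.mp hp)))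
        · exact ih1.2 (iff_of_false hp (not_not_intro hq))
      · by_cases hp : inC p
        · exact ih1.2 (iff_of_true hp hq)
        · have hr : inC r := by
            by_contra hr
            exact hp (hiff.mpr hr)
          exact B2_trans d1 d2 hpq (ih2.2 (iff_of_false hq (not_not_intro hr)))

lemma exists_bridge1 (s : Set ((α ⊕ γ) × ZMod 2)) (hs : s ∈ (diagComp d1 d2).classes)
    (ha : ∃ a x, (Sum.inl a, x) ∈ s) (hc : ∃ c x, (Sum.inr c, x) ∈ s) :
    ∃ D ∈ d1.classes, (∃ a x, (Sum.inl a, x) ∈ D ∧ ((Sum.inl a : α ⊕ γ), x) ∈ s) ∧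
      ∃ b y, ((Sum.inr b : α ⊕ β), y) ∈ D := by
  obtain ⟨y0, rfl⟩ := hs
  obtain ⟨a, x, hax⟩ := ha
  obtain ⟨c, z, hcz⟩ := hc
  have hax' : Relation.EqvGen (genRel d1 d2) (Sum.inl a, x) (ins3 y0.1, y0.2) := hax
  have hcz' : Relation.EqvGen (genRel d1 d2) (Sum.inr (Sum.inr c), z) (ins3 y0.1, y0.2) := hcz
  have hj : Relation.EqvGen (genRel d1 d2) (Sum.inl a, x) (Sum.inr (Sum.inr c), z) :=
    hax'.trans _ _ _ (hcz'.symm _ _)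
  have hAp : inA ((Sum.inl a, x) : (α ⊕ β ⊕ γ) × ZMod 2) := ⟨a, rfl⟩
  have hAq : ¬ inA ((Sum.inr (Sum.inr c), z) : (α ⊕ β ⊕ γ) × ZMod 2) := by
    rintro ⟨a0, h⟩; simp at h
  obtain ⟨a', x', b, y', hd, he⟩ := (key d1 d2 hj).1 (iff_of_true hAp hAq)
  refine ⟨{w | d1.r w (Sum.inl a', x')}, ⟨(Sum.inl a', x'), rfl⟩,
    ⟨a', x', d1.refl' _, ?_⟩, b, y', d1.symm' hd⟩
  show Relation.EqvGen (genRel d1 d2) (ins3 (Sum.inl a'), x') (ins3 y0.1, y0.2)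
  exact (he.symm _ _).trans _ _ _ hax'

lemma exists_bridge2 (s : Set ((α ⊕ γ) × ZMod 2)) (hs : s ∈ (diagComp d1 d2).classes)
    (ha : ∃ a x, (Sum.inl a, x) ∈ s) (hc : ∃ c x, (Sum.inr c, x) ∈ s) :
    ∃ D ∈ d2.classes, (∃ c x, (Sum.inr c, x) ∈ D ∧ ((Sum.inr c : α ⊕ γ), x) ∈ s) ∧
      ∃ b y, ((Sum.inl b : β ⊕ γ), y) ∈ D := by
  obtain ⟨y0, rfl⟩ := hs
  obtain ⟨a, x, hax⟩ := ha
  obtain ⟨c, z, hcz⟩ := hc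
  have hax' : Relation.EqvGen (genRel d1 d2) (Sum.inl a, x) (ins3 y0.1, y0.2) := hax
  have hcz' : Relation.EqvGen (genRel d1 d2) (Sum.inr (Sum.inr c), z) (ins3 y0.1, y0.2) := hcz
  have hj : Relation.EqvGen (genRel d1 d2) (Sum.inl a, x) (Sum.inr (Sum.inr c), z) :=
    hax'.trans _ _ _ (hcz'.symm _ _)
  have hCp : ¬ inC ((Sum.inl a, x) : (α ⊕ β ⊕ γ) × ZMod 2) := by
    rintro ⟨c0, h⟩; simp at h
  have hCq : inC ((Sum.inr (Sum.inr c), z) : (α ⊕ β ⊕ γ) × ZMod 2) := ⟨c, rfl⟩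
  obtain ⟨b, x', c', y', hd, he⟩ := (key d1 d2 hj).2 (iff_of_false hCp (not_not_intro hCq))
  refine ⟨{w | d2.r w (Sum.inr c', y')}, ⟨(Sum.inr c', y'), rfl⟩,
    ⟨c', y', d2.refl' _, ?_⟩, b, x', hd⟩
  show Relation.EqvGen (genRel d1 d2) (ins3 (Sum.inr c'), y') (ins3 y0.1, y0.2)
  exact (he.symm _ _).trans _ _ _ hax'

end Aux

/-- the number of through classes of a composite diagram is at most the
number of through classes of each factor: the propagating number does not increase
under diagram composition. -/
theorem stmt_9 {α β γ : Type*} [Finite α] [Finite β] [Finite γ]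
    (d1 : Setoid ((α ⊕ β) × ZMod 2)) (d2 : Setoid ((β ⊕ γ) × ZMod 2)) :
    Nat.card {C : Set ((α ⊕ γ) × ZMod 2) // C ∈ (diagComp d1 d2).classes ∧
        (∃ a x, (Sum.inl a, x) ∈ C) ∧ (∃ c x, (Sum.inr c, x) ∈ C)} ≤
      min
        (Nat.card {C : Set ((α ⊕ β) × ZMod 2) // C ∈ d1.classes ∧
          (∃ a x, (Sum.inl a, x) ∈ C) ∧ (∃ b x, (Sum.inr b, x) ∈ C)})
        (Nat.card {C : Set ((β ⊕ γ) × ZMod 2) // C ∈ d2.classes ∧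
          (∃ b x, (Sum.inl b, x) ∈ C) ∧ (∃ c x, (Sum.inr c, x) ∈ C)}) := by
  refine le_min ?_ ?_
  · have hex : ∀ s : {C : Set ((α ⊕ γ) × ZMod 2) // C ∈ (diagComp d1 d2).classes ∧
        (∃ a x, (Sum.inl a, x) ∈ C) ∧ (∃ c x, (Sum.inr c, x) ∈ C)},
        ∃ t : {C : Set ((α ⊕ β) × ZMod 2) // C ∈ d1.classes ∧
          (∃ a x, (Sum.inl a, x) ∈ C) ∧ (∃ b x, (Sum.inr b, x) ∈ C)},
        ∃ a x, (Sum.inl a, x) ∈ t.1 ∧ ((Sum.inl a : α ⊕ γ), x) ∈ s.1 := by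
      intro s
      obtain ⟨D, hD, ⟨a, x, h1, h2⟩, b, y, hb⟩ :=
        exists_bridge1 d1 d2 s.1 s.2.1 s.2.2.1 s.2.2.2
      exact ⟨⟨D, hD, ⟨a, x, h1⟩, ⟨b, y, hb⟩⟩, a, x, h1, h2⟩
    choose f hf using hex
    refine Nat.card_le_card_of_injective f ?_
    intro s t hst
    obtain ⟨a, x, hD1, hs1⟩ := hf s
    obtain ⟨a2, x2, hD2, ht2⟩ := hf t
    rw [hst] at hD1
    obtain ⟨w, hw⟩ := (f t).2.1
    rw [hw] at hD1 hD2
    have hd : d1.r (Sum.inl a, x) (Sum.inl a2, x2) := d1.trans' hD1 (d1.symm' hD2)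
    have hcomp : (diagComp d1 d2).r ((Sum.inl a : α ⊕ γ), x) ((Sum.inl a2 : α ⊕ γ), x2) :=
      Relation.EqvGen.rel _ _ (Or.inl ⟨(Sum.inl a, x), (Sum.inl a2, x2), hd, rfl, rfl⟩)
    have hts : ((Sum.inl a : α ⊕ γ), x) ∈ t.1 := by
      obtain ⟨y0, hy0⟩ := t.2.1
      rw [hy0] at ht2 ⊢
      exact (diagComp d1 d2).trans' hcomp ht2
    exact Subtype.ext (Setoid.eq_of_mem_classes s.2.1 hs1 t.2.1 hts)
  · have hex : ∀ s : {C : Set ((α ⊕ γ) × ZMod 2) // C ∈ (diagComp d1 d2).classes ∧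
        (∃ a x, (Sum.inl a, x) ∈ C) ∧ (∃ c x, (Sum.inr c, x) ∈ C)},
        ∃ t : {C : Set ((β ⊕ γ) × ZMod 2) // C ∈ d2.classes ∧
          (∃ b x, (Sum.inl b, x) ∈ C) ∧ (∃ c x, (Sum.inr c, x) ∈ C)},
        ∃ c x, (Sum.inr c, x) ∈ t.1 ∧ ((Sum.inr c : α ⊕ γ), x) ∈ s.1 := by
      intro s
      obtain ⟨D, hD, ⟨c, x, h1, h2⟩, b, y, hb⟩ :=
        exists_bridge2 d1 d2 s.1 s.2.1 s.2.2.1 s.2.2.2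
      exact ⟨⟨D, hD, ⟨b, y, hb⟩, ⟨c, x, h1⟩⟩, c, x, h1, h2⟩
    choose f hf using hex
    refine Nat.card_le_card_of_injective f ?_
    intro s t hst
    obtain ⟨c, x, hD1, hs1⟩ := hf s
    obtain ⟨c2, x2, hD2, ht2⟩ := hf t
    rw [hst] at hD1
    obtain ⟨w, hw⟩ := (f t).2.1
    rw [hw] at hD1 hD2
    have hd : d2.r (Sum.inr c, x) (Sum.inr c2, x2) := d2.trans' hD1 (d2.symm' hD2)
    have hcomp : (diagComp d1 d2).r ((Sum.inr c : α ⊕ γ), x) ((Sum.inr c2 : α ⊕ γ), x2) :=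
      Relation.EqvGen.rel _ _ (Or.inr ⟨(Sum.inr c, x), (Sum.inr c2, x2), hd, rfl, rfl⟩)
    have hts : ((Sum.inr c : α ⊕ γ), x) ∈ t.1 := by
      obtain ⟨y0, hy0⟩ := t.2.1
      rw [hy0] at ht2 ⊢
      exact (diagComp d1 d2).trans' hcomp ht2
    exact Subtype.ext (Setoid.eq_of_mem_classes s.2.1 hs1 t.2.1 hts)
end

section
/- Let A, B, C be finite types, let d1 be an equivalence relation on (A ⊕ B) × ZMod 2 and d2 an equivalence relation on (B ⊕ C) × ZMod 2. Let flip denote the operation transporting an equivalence relation on (X ⊕ Y) × ZMod 2 to one on (Y ⊕ X) × ZMod 2 along the swap equivalence. Then flip(d1 ∘ d2) = flip(d2) ∘ flip(d1), and the number of equivalence classes of the intermediate relation on (A ⊕ B ⊕ C) × ZMod 2 that are contained in B × ZMod 2 (the classes removed in forming the composite, which give the power of x in the partition-algebra product) is the same for the two compositions. Hence the flip map extends to an involutary anti-automorphism of the diagram algebra. -/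
/-- The flip of a relation on `(X ⊕ Y) × ZMod 2`: transport along the swap
equivalence `X ⊕ Y ≃ Y ⊕ X`. -/
def flipRel {X Y : Type*} (d : Setoid ((X ⊕ Y) × ZMod 2)) :
    Setoid ((Y ⊕ X) × ZMod 2) :=
  Setoid.comap (fun p => (p.1.swap, p.2)) d

/-!
Reversing the three rows, `α ⊕ β ⊕ γ ≃ γ ⊕ β ⊕ α`, fixes the middle row and carries the
generators of the join of `d1` and `d2` to those of the join of `flip d2` and `flip d1`.
So it identifies the two joins, hence their restrictions to the outer rows, and it maps the
classes of one join lying in the middle row bijectively onto those of the other.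
-/

theorem Setoid.image_mem_classes_iff {X Y : Type*} (e : X ≃ Y) (r : Setoid Y) {C : Set X} :
    e '' C ∈ r.classes ↔ C ∈ (r.comap e).classes := by
  constructor
  · rintro ⟨y, hy⟩
    refine ⟨e.symm y, ?_⟩
    rw [← e.preimage_image C, hy]
    ext x
    simp [Setoid.comap_rel]
  · rintro ⟨y, rfl⟩
    refine ⟨e y, ?_⟩
    ext z
    simp [Equiv.image_eq_preimage_symm, Setoid.comap_rel]

section flipRel

variable {X Y : Type*} (d : Setoid ((X ⊕ Y) × ZMod 2))

theorem flipRel_rel {p q : (Y ⊕ X) × ZMod 2} :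
    flipRel d p q ↔ d (p.1.swap, p.2) (q.1.swap, q.2) :=
  Iff.rfl

theorem flipRel_flipRel : flipRel (flipRel d) = d := by
  ext p q
  simp [flipRel_rel]

end flipRel

theorem diagComp_rel {α β γ : Type*} (d1 : Setoid ((α ⊕ β) × ZMod 2))
    (d2 : Setoid ((β ⊕ γ) × ZMod 2)) {p q : (α ⊕ γ) × ZMod 2} :
    diagComp d1 d2 p q ↔ joinRel d1 d2 (ins3 p.1, p.2) (ins3 q.1, q.2) :=
  Iff.rfl

def sumRevEquiv (α β γ : Type*) : α ⊕ β ⊕ γ ≃ γ ⊕ β ⊕ α where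
  toFun := Sum.elim (Sum.inr ∘ Sum.inr) (Sum.elim (Sum.inr ∘ Sum.inl) Sum.inl)
  invFun := Sum.elim (Sum.inr ∘ Sum.inr) (Sum.elim (Sum.inr ∘ Sum.inl) Sum.inl)
  left_inv := by rintro (a | b | c) <;> rfl
  right_inv := by rintro (c | b | a) <;> rfl

abbrev rowRev (α β γ : Type*) : (α ⊕ β ⊕ γ) × ZMod 2 ≃ (γ ⊕ β ⊕ α) × ZMod 2 :=
  (sumRevEquiv α β γ).prodCongr (Equiv.refl _)

section sumRevEquiv

variable {α β γ : Type*}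

theorem sumRevEquiv_ins1 (z : α ⊕ β) : sumRevEquiv α β γ (ins1 z) = ins2 z.swap := by
  rcases z with a | b <;> rfl

theorem sumRevEquiv_ins2 (z : β ⊕ γ) : sumRevEquiv α β γ (ins2 z) = ins1 z.swap := by
  rcases z with b | c <;> rfl

theorem sumRevEquiv_ins3 (z : α ⊕ γ) : sumRevEquiv α β γ (ins3 z) = ins3 z.swap := by
  rcases z with a | c <;> rfl

theorem rowRev_symm : (rowRev α β γ).symm = rowRev γ β α :=
  rfl

theorem rowRev_eq_inr_inl_iff {p : (α ⊕ β ⊕ γ) × ZMod 2} {b : β} {x : ZMod 2} :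
    rowRev α β γ p = (Sum.inr (Sum.inl b), x) ↔ p = (Sum.inr (Sum.inl b), x) := by
  rw [← Equiv.eq_symm_apply]
  rfl

end sumRevEquiv

section joinRel

variable {α β γ : Type*} (d1 : Setoid ((α ⊕ β) × ZMod 2)) (d2 : Setoid ((β ⊕ γ) × ZMod 2))

theorem joinRel_le_comap_rowRev :
    joinRel d1 d2 ≤ (joinRel (flipRel d2) (flipRel d1)).comap (rowRev α β γ) := by
  refine Setoid.eqvGen_le fun p q hpq => Relation.EqvGen.rel _ _ ?_
  rcases hpq with ⟨p', q', h, rfl, rfl⟩ | ⟨p', q', h, rfl, rfl⟩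
  · refine Or.inr ⟨(p'.1.swap, p'.2), (q'.1.swap, q'.2), ?_, ?_, ?_⟩
    · simpa [flipRel_rel] using h
    all_goals simp [sumRevEquiv_ins1]
  · refine Or.inl ⟨(p'.1.swap, p'.2), (q'.1.swap, q'.2), ?_, ?_, ?_⟩
    · simpa [flipRel_rel] using h
    all_goals simp [sumRevEquiv_ins2]

theorem comap_rowRev_joinRel_flipRel :
    (joinRel (flipRel d2) (flipRel d1)).comap (rowRev α β γ) = joinRel d1 d2 := by
  refine le_antisymm (fun p q hpq => ?_) (joinRel_le_comap_rowRev d1 d2)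
  have h := joinRel_le_comap_rowRev (flipRel d2) (flipRel d1) hpq
  rwa [flipRel_flipRel, flipRel_flipRel, Setoid.comap_rel, ← rowRev_symm,
    Equiv.symm_apply_apply, Equiv.symm_apply_apply] at h

end joinRel

theorem stmt_10_general {α β γ : Type*}
    (d1 : Setoid ((α ⊕ β) × ZMod 2)) (d2 : Setoid ((β ⊕ γ) × ZMod 2)) :
    flipRel (diagComp d1 d2) = diagComp (flipRel d2) (flipRel d1) ∧
    Nat.card {C : Set ((α ⊕ β ⊕ γ) × ZMod 2) // C ∈ (joinRel d1 d2).classes ∧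
        ∀ p ∈ C, ∃ b x, p = (Sum.inr (Sum.inl b), x)} =
      Nat.card {C : Set ((γ ⊕ β ⊕ α) × ZMod 2) //
        C ∈ (joinRel (flipRel d2) (flipRel d1)).classes ∧
        ∀ p ∈ C, ∃ b x, p = (Sum.inr (Sum.inl b), x)} := by
  constructor
  · ext p q
    rw [flipRel_rel, diagComp_rel, diagComp_rel, ← comap_rowRev_joinRel_flipRel,
      Setoid.comap_rel]
    simp [sumRevEquiv_ins3]
  · rw [← comap_rowRev_joinRel_flipRel d1 d2]
    refine Nat.card_congr ((Equiv.Set.congr (rowRev α β γ)).subtypeEquiv fun C => ?_)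
    simp only [Equiv.Set.congr_apply, Setoid.image_mem_classes_iff, Set.forall_mem_image,
      rowRev_eq_inr_inl_iff]

/-- `flip (d1 ∘ d2) = flip d2 ∘ flip d1`, and the number of classes of
the intermediate join relation contained in the middle row `β × ZMod 2` (the
removed components, giving the power of `x` in the partition-algebra product) is
the same for the two compositions.  Hence flipping extends to an involutary
anti-automorphism of the diagram algebra. -/
theorem stmt_10 {α β γ : Type*} [Finite α] [Finite β] [Finite γ]
    (d1 : Setoid ((α ⊕ β) × ZMod 2)) (d2 : Setoid ((β ⊕ γ) × ZMod 2)) :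
    flipRel (diagComp d1 d2) = diagComp (flipRel d2) (flipRel d1) ∧
    Nat.card {C : Set ((α ⊕ β ⊕ γ) × ZMod 2) // C ∈ (joinRel d1 d2).classes ∧
        ∀ p ∈ C, ∃ b x, p = (Sum.inr (Sum.inl b), x)} =
      Nat.card {C : Set ((γ ⊕ β ⊕ α) × ZMod 2) //
        C ∈ (joinRel (flipRel d2) (flipRel d1)).classes ∧
        ∀ p ∈ C, ∃ b x, p = (Sum.inr (Sum.inl b), x)} :=
  stmt_10_general d1 d2
end

section
/- Fix k, s1, s2 with 2s1 + s2 ≤ 2k. Let I(k, s1, s2) be the set of 2k-diagrams (Z2-stable equivalence relations on (Fin k ⊕ Fin k) × ZMod 2) having exactly 2s1 + s2 through classes, of which exactly 2s1 are non-invariant under g (these occur in s1 pairs {C, g·C}) and exactly s2 are g-invariant. Let M(k, s1, s2) be the set of pairs (d', P), where d' is a Z2-stable equivalence relation on Fin k × ZMod 2 and P consists of a choice of s1 unordered pairs {C, g·C} of distinct non-invariant equivalence classes of d' together with s2 g-invariant equivalence classes of d' (the chosen pairs and classes being indexed by Fin s1 and Fin s2 in increasing order of their minimal vertices). Then the map sending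 a diagram d to the triple consisting of its top restriction with its through-class data (d⁺, P), its bottom restriction with its through-class data (d⁻, Q), and the element ((f, σ1), σ2) ∈ (Fin s1 → ZMod 2) × Equiv.Perm (Fin s1) × Equiv.Perm (Fin s2) recording how the through classes of d connect top data to bottom data, is a bijection from I(k, s1, s2) onto M(k, s1, s2) × ((Fin s1 → ZMod 2) × Equiv.Perm (Fin s1) × Equiv.Perm (Fin s2)) × M(k, s1, s2). -/
/-!
A diagram is determined by its two row restrictions together with its through classes, and a
through class is the union of its top part and its bottom part. The top parts of the
non-invariant through classes come in pairs `{T, g·T}`, exactly one member of which contains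
`(i₀, 0)` for its minimal vertex `i₀`; listing these normalized members, and the invariant top
parts, by minimal vertex gives the top datum, and likewise at the bottom. Every through class
then joins a twist of the `i`-th top pair to a twist of the `σ₁ i`-th bottom pair, or the `l`-th
invariant top class to the `σ₂ l`-th invariant bottom class. Conversely, gluing two such data
along `((f, σ₁), σ₂)` gives a diagram whose row data and connection are the given ones, so
gluing is a bijection.
-/

/-- The action of the nonidentity element `g` of `ZMod 2`: `(t,x) ↦ (t, 1+x)`. -/
def gAct {T : Type*} (p : T × ZMod 2) : T × ZMod 2 := (p.1, 1 + p.2)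

/-- A through class: a subset of `(X ⊕ Y) × ZMod 2` meeting both the top row and
the bottom row. -/
def Through {X Y : Type*} (C : Set ((X ⊕ Y) × ZMod 2)) : Prop :=
  (∃ a x, (Sum.inl a, x) ∈ C) ∧ (∃ b x, (Sum.inr b, x) ∈ C)

/-- The minimal vertex (as a natural number) of a subset of `Fin k × ZMod 2`. -/
noncomputable def minV {k : ℕ} (C : Set (Fin k × ZMod 2)) : ℕ :=
  sInf ((fun p : Fin k × ZMod 2 => (p.1 : ℕ)) '' C)

/-- `MData k s1 s2` is the set `M[(r,(s1,s2))]`: a `ZMod 2`-stable equivalence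
relation `d` on `Fin k × ZMod 2` together with a choice of `s1` unordered pairs
`{C, g·C}` of distinct non-`g`-invariant classes of `d` (each pair recorded by its
normalized representative, the member class containing `(i₀, 0)` where `i₀` is the
minimal vertex of the pair) and a choice of `s2` `g`-invariant classes of `d`,
both families being indexed by `Fin s1`, resp. `Fin s2`, in increasing order of
their minimal vertices. -/
structure MData (k s1 s2 : ℕ) where
  d : Setoid (Fin k × ZMod 2)
  stable : IsStable d
  pairRep : Fin s1 → Set (Fin k × ZMod 2)
  pairRep_mem : ∀ i, pairRep i ∈ d.classes
  pairRep_noninv : ∀ i, gAct '' pairRep i ≠ pairRep i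
  pairRep_norm : ∀ i, ∃ j : Fin k,
    (j : ℕ) = minV (pairRep i) ∧ (j, (0 : ZMod 2)) ∈ pairRep i
  pairRep_mono : StrictMono fun i => minV (pairRep i)
  invCl : Fin s2 → Set (Fin k × ZMod 2)
  invCl_mem : ∀ l, invCl l ∈ d.classes
  invCl_inv : ∀ l, gAct '' invCl l = invCl l
  invCl_mono : StrictMono fun l => minV (invCl l)

/-- `d` belongs to `I(k, s1, s2)`: `d` is a `ZMod 2`-stable equivalence relation on
`(Fin k ⊕ Fin k) × ZMod 2` having exactly `2·s1 + s2` through classes, of which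
exactly `2·s1` are non-`g`-invariant (occurring in `s1` pairs `{C, g·C}`) and
exactly `s2` are `g`-invariant. -/
def IsDiagram (k s1 s2 : ℕ) (d : Setoid ((Fin k ⊕ Fin k) × ZMod 2)) : Prop :=
  IsStable d ∧
  Nat.card {C : Set ((Fin k ⊕ Fin k) × ZMod 2) //
      C ∈ d.classes ∧ Through C ∧ gAct '' C ≠ C} = 2 * s1 ∧
  Nat.card {C : Set ((Fin k ⊕ Fin k) × ZMod 2) //
      C ∈ d.classes ∧ Through C ∧ gAct '' C = C} = s2

open Function Set CharTwo

attribute [ext] MData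

section Twist
variable {T : Type*}

def twist (a : ZMod 2) (S : Set (T × ZMod 2)) : Set (T × ZMod 2) := {p | (p.1, a + p.2) ∈ S}

@[simp] lemma mem_twist {a : ZMod 2} {S : Set (T × ZMod 2)} {p : T × ZMod 2} :
    p ∈ twist a S ↔ (p.1, a + p.2) ∈ S := Iff.rfl

@[simp] lemma twist_twist (a b : ZMod 2) (S : Set (T × ZMod 2)) :
    twist a (twist b S) = twist (a + b) S := by
  ext p; simp only [mem_twist, add_left_comm b a, add_assoc]

@[simp] lemma twist_zero (S : Set (T × ZMod 2)) : twist 0 S = S := by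
  ext p; simp

@[simp] lemma twist_twist_self (a : ZMod 2) (S : Set (T × ZMod 2)) : twist a (twist a S) = S := by
  rw [twist_twist, CharTwo.add_self_eq_zero, twist_zero]

lemma twist_injective (a : ZMod 2) : Injective (twist (T := T) a) :=
  LeftInverse.injective (twist_twist_self a)

lemma twist_eq_iff_eq_twist {a : ZMod 2} {S S' : Set (T × ZMod 2)} :
    twist a S = S' ↔ S = twist a S' := by
  constructor <;> rintro rfl <;> simp

lemma image_gAct (S : Set (T × ZMod 2)) : gAct '' S = twist 1 S := by
  ext p
  refine ⟨?_, fun hp => ⟨(p.1, 1 + p.2), hp, by simp [gAct]⟩⟩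
  rintro ⟨q, hq, rfl⟩
  simpa [gAct] using hq

lemma twist_eq_self_of_twist_one_eq {S : Set (T × ZMod 2)} (h : twist 1 S = S) (a : ZMod 2) :
    twist a S = S := by
  fin_cases a
  · exact twist_zero S
  · exact h

lemma eq_zero_of_twist_eq_self {S : Set (T × ZMod 2)} (h1 : twist 1 S ≠ S)
    {c : ZMod 2} (h : twist c S = S) : c = 0 := by
  fin_cases c
  · rfl
  · exact absurd h h1

lemma IsStable.twist_mem_classes {d : Setoid (T × ZMod 2)} (hd : IsStable d)
    {C : Set (T × ZMod 2)} (hC : C ∈ d.classes) (a : ZMod 2) : twist a C ∈ d.classes := by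
  obtain ⟨y, rfl⟩ := hC
  refine ⟨(y.1, a + y.2), Set.ext fun p => ⟨fun hp => ?_, fun hp => ?_⟩⟩
  · simpa using hd a _ _ hp
  · simpa using hd a _ _ hp

end Twist

section Classes
variable {α : Type*} {d : Setoid α} {C C' : Set α}

lemma Setoid.nonempty_of_mem_classes (hC : C ∈ d.classes) : C.Nonempty :=
  Setoid.nonempty_of_mem_partition (Setoid.isPartition_classes d) hC

lemma Setoid.rel_of_mem_classes (hC : C ∈ d.classes) {x y : α} (hx : x ∈ C) (hy : y ∈ C) :
    d x y := by
  obtain ⟨z, rfl⟩ := hC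
  exact d.trans hx (d.symm hy)

lemma Setoid.mem_of_mem_classes_of_rel (hC : C ∈ d.classes) {x y : α} (hx : x ∈ C)
    (hxy : d y x) : y ∈ C := by
  obtain ⟨z, rfl⟩ := hC
  exact d.trans hxy hx

lemma Setoid.eq_setOf_rel_of_mem_classes (hC : C ∈ d.classes) {x : α} (hx : x ∈ C) :
    C = {y | d y x} :=
  Setoid.eq_of_mem_classes hC hx (d.mem_classes x) (d.refl x)

end Classes

lemma eq_of_strictMono_comp_of_range_eq {α : Type*} (μ : α → ℕ) {n : ℕ}
    {e e' : Fin n → α}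
    (he : StrictMono (μ ∘ e)) (he' : StrictMono (μ ∘ e')) (h : range e = range e') :
    e = e' := by
  have hμ : μ ∘ e = μ ∘ e' := (he.range_inj he').1 (by rw [range_comp, range_comp, h])
  funext i
  obtain ⟨j, hj⟩ : e i ∈ range e' := h ▸ mem_range_self i
  rw [← hj, he'.injective (show μ (e' j) = μ (e' i) by rw [hj]; exact congrFun hμ i)]

lemma exists_strictMono_comp_range_eq {α : Type*} [Finite α] (μ : α → ℕ) {S : Set α}
    (hμ : InjOn μ S) {n : ℕ} (hS : Nat.card S = n) :
    ∃ e : Fin n → α, StrictMono (μ ∘ e) ∧ range e = S := by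
  obtain ⟨t, ht⟩ := (S.toFinite.image μ).exists_finset_coe
  have hcard : t.card = n := by
    rw [← hS, ← Nat.card_image_of_injOn hμ, ← ht, Nat.card_coe_set_eq, Set.ncard_coe_finset]
  have hmem : ∀ i, ∃ x ∈ S, μ x = t.orderEmbOfFin hcard i := fun i => by
    have hi : t.orderEmbOfFin hcard i ∈ (t : Set ℕ) := t.orderEmbOfFin_mem hcard i
    rw [ht] at hi
    exact hi
  choose e he hμe using hmem
  have hcomp : μ ∘ e = t.orderEmbOfFin hcard := funext hμe
  refine ⟨e, hcomp ▸ (t.orderEmbOfFin hcard).strictMono, ?_⟩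
  refine (range_subset_iff.2 he).antisymm fun x hx => ?_
  obtain ⟨i, hi⟩ : μ x ∈ range (t.orderEmbOfFin hcard) := by
    rw [Finset.range_orderEmbOfFin, ht]
    exact mem_image_of_mem μ hx
  exact ⟨i, hμ (he i) hx ((hμe i).trans hi)⟩

section Normalized
variable {k : ℕ}

/-- The normalization of `MData.pairRep_norm`: of a non-invariant class and its twist, exactly one
is normalized. -/
def IsNormalized (S : Set (Fin k × ZMod 2)) : Prop :=
  ∃ j : Fin k, (j : ℕ) = minV S ∧ (j, (0 : ZMod 2)) ∈ S

@[simp] lemma minV_twist (a : ZMod 2) (S : Set (Fin k × ZMod 2)) :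
    minV (twist a S) = minV S := by
  unfold minV
  congr 1
  ext n
  constructor
  · rintro ⟨p, hp, rfl⟩
    exact ⟨_, hp, rfl⟩
  · rintro ⟨p, hp, rfl⟩
    exact ⟨(p.1, a + p.2), by simpa using hp, rfl⟩

lemma exists_mem_minV {S : Set (Fin k × ZMod 2)} (h : S.Nonempty) :
    ∃ p ∈ S, (p.1 : ℕ) = minV S :=
  Nat.sInf_mem (h.image _)

lemma exists_isNormalized_twist {S : Set (Fin k × ZMod 2)} (h : S.Nonempty) :
    ∃ b, IsNormalized (twist b S) := by
  obtain ⟨p, hp, hmin⟩ := exists_mem_minV h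
  exact ⟨p.2, p.1, by rwa [minV_twist], by simpa using hp⟩

lemma isNormalized_of_twist_one_eq {S : Set (Fin k × ZMod 2)} (h : S.Nonempty)
    (h1 : twist 1 S = S) : IsNormalized S := by
  obtain ⟨b, hb⟩ := exists_isNormalized_twist h
  rwa [twist_eq_self_of_twist_one_eq h1] at hb

variable {e : Setoid (Fin k × ZMod 2)} {S S' : Set (Fin k × ZMod 2)}

lemma IsNormalized.eq_of_minV_eq (hn : IsNormalized S) (hn' : IsNormalized S')
    (hS : S ∈ e.classes) (hS' : S' ∈ e.classes) (h : minV S = minV S') : S = S' := by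
  obtain ⟨j, hj, hj0⟩ := hn
  obtain ⟨j', hj', hj0'⟩ := hn'
  obtain rfl : j = j' := Fin.ext (by rw [hj, hj', h])
  exact Setoid.eq_of_mem_classes hS hj0 hS' hj0'

lemma IsStable.eq_zero_of_isNormalized_twist (he : IsStable e) (hS : S ∈ e.classes)
    (h1 : twist 1 S ≠ S) (hn : IsNormalized S) {a : ZMod 2} (hna : IsNormalized (twist a S)) :
    a = 0 :=
  eq_zero_of_twist_eq_self h1 (hna.eq_of_minV_eq hn (he.twist_mem_classes hS a) hS (minV_twist a S))

lemma IsStable.card_eq_two_mul_card_isNormalized (he : IsStable e) {X : Set (Set (Fin k × ZMod 2))}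
    (hX : ∀ T ∈ X, T ∈ e.classes ∧ twist 1 T ≠ T)
    (htw : ∀ T ∈ X, ∀ a, twist a T ∈ X) :
    Nat.card X = 2 * Nat.card {T | T ∈ X ∧ IsNormalized T} := by
  let f : {T | T ∈ X ∧ IsNormalized T} × ZMod 2 → X :=
    fun Ta => ⟨twist Ta.2 Ta.1, htw _ Ta.1.2.1 _⟩
  have hf : Bijective f := by
    refine ⟨?_, ?_⟩
    · rintro ⟨⟨T, hT, hTn⟩, a⟩ ⟨⟨T', hT', hT'n⟩, a'⟩ h
      have h' : T = twist (a + a') T' := by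
        rw [← twist_twist, ← twist_eq_iff_eq_twist]
        exact congrArg Subtype.val h
      obtain rfl := CharTwo.add_eq_zero.1 <|
        he.eq_zero_of_isNormalized_twist (hX T' hT').1 (hX T' hT').2 hT'n (h' ▸ hTn)
      simp_all
    · rintro ⟨T, hT⟩
      obtain ⟨b, hb⟩ := exists_isNormalized_twist (Setoid.nonempty_of_mem_classes (hX T hT).1)
      exact ⟨(⟨twist b T, htw T hT b, hb⟩, b), Subtype.ext (twist_twist_self b T)⟩
  rw [← Nat.card_eq_of_bijective f hf, Nat.card_prod, Nat.card_zmod, mul_comm]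

end Normalized

namespace MData
variable {k s1 s2 : ℕ} (M : MData k s1 s2)

lemma twist_pairRep_mem_classes (i : Fin s1) (a : ZMod 2) :
    twist a (M.pairRep i) ∈ M.d.classes :=
  M.stable.twist_mem_classes (M.pairRep_mem i) a

lemma twist_one_pairRep_ne (i : Fin s1) : twist 1 (M.pairRep i) ≠ M.pairRep i := by
  rw [← image_gAct]
  exact M.pairRep_noninv i

@[simp] lemma twist_invCl (a : ZMod 2) (l : Fin s2) : twist a (M.invCl l) = M.invCl l :=
  twist_eq_self_of_twist_one_eq (by rw [← image_gAct]; exact M.invCl_inv l) a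

lemma invCl_injective : Injective M.invCl :=
  fun _ _ h => M.invCl_mono.injective (congrArg minV h)

lemma twist_pairRep_inj {i j : Fin s1} {a b : ZMod 2} :
    twist a (M.pairRep i) = twist b (M.pairRep j) ↔ a = b ∧ i = j := by
  refine ⟨fun h => ?_, by rintro ⟨rfl, rfl⟩; rfl⟩
  obtain rfl : i = j := M.pairRep_mono.injective (by simpa using congrArg minV h)
  rw [twist_eq_iff_eq_twist, twist_twist, eq_comm] at h
  exact ⟨CharTwo.add_eq_zero.1 (eq_zero_of_twist_eq_self (M.twist_one_pairRep_ne i) h), rfl⟩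

variable {M}

lemma eq_of_mem_twist_pairRep {i j : Fin s1} {a b : ZMod 2} {x : Fin k × ZMod 2}
    (hi : x ∈ twist a (M.pairRep i)) (hj : x ∈ twist b (M.pairRep j)) : a = b ∧ i = j :=
  M.twist_pairRep_inj.1 <| Setoid.eq_of_mem_classes
    (M.twist_pairRep_mem_classes i a) hi (M.twist_pairRep_mem_classes j b) hj

lemma not_mem_invCl_of_mem_twist_pairRep {i : Fin s1} {a : ZMod 2} {x : Fin k × ZMod 2}
    (hx : x ∈ twist a (M.pairRep i)) (l : Fin s2) : x ∉ M.invCl l := fun hl => by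
  have h := Setoid.eq_of_mem_classes (M.twist_pairRep_mem_classes i a) hx (M.invCl_mem l) hl
  have h1 : twist (1 + a) (M.pairRep i) = twist a (M.pairRep i) := by
    rw [← twist_twist, h, twist_invCl]
  exact one_ne_zero (add_eq_right.1 (M.twist_pairRep_inj.1 h1).1)

lemma eq_of_mem_invCl {l l' : Fin s2} {x : Fin k × ZMod 2} (hl : x ∈ M.invCl l)
    (hl' : x ∈ M.invCl l') : l = l' :=
  M.invCl_injective (Setoid.eq_of_mem_classes (M.invCl_mem l) hl (M.invCl_mem l') hl')

end MData

section Rows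
variable {α β γ : Type*}

def rowPart (ρ : α → γ) (C : Set (γ × ZMod 2)) : Set (α × ZMod 2) :=
  {p | (ρ p.1, p.2) ∈ C}

def rowSetoid (ρ : α → γ) (d : Setoid (γ × ZMod 2)) : Setoid (α × ZMod 2) :=
  Setoid.comap (fun p => (ρ p.1, p.2)) d

def joinRows (A : Set (α × ZMod 2)) (B : Set (β × ZMod 2)) : Set ((α ⊕ β) × ZMod 2) :=
  {w | Sum.elim (fun a => (a, w.2) ∈ A) (fun b => (b, w.2) ∈ B) w.1}

lemma IsStable.rowSetoid {d : Setoid (γ × ZMod 2)} (hd : IsStable d) (ρ : α → γ) :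
    IsStable (rowSetoid ρ d) :=
  fun g _ _ h => hd g _ _ h

lemma rowPart_twist (ρ : α → γ) (a : ZMod 2) (C : Set (γ × ZMod 2)) :
    rowPart ρ (twist a C) = twist a (rowPart ρ C) := rfl

variable {A A' : Set (α × ZMod 2)} {B B' : Set (β × ZMod 2)}

@[simp] lemma rowPart_inl_joinRows : rowPart Sum.inl (joinRows A B) = A := rfl

@[simp] lemma rowPart_inr_joinRows : rowPart Sum.inr (joinRows A B) = B := rfl

lemma joinRows_rowPart (C : Set ((α ⊕ β) × ZMod 2)) :
    joinRows (rowPart Sum.inl C) (rowPart Sum.inr C) = C := by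
  ext ⟨a | b, x⟩ <;> rfl

lemma joinRows_inj : joinRows A B = joinRows A' B' ↔ A = A' ∧ B = B' := by
  refine ⟨fun h => ⟨?_, ?_⟩, by rintro ⟨rfl, rfl⟩; rfl⟩
  · simpa using congrArg (rowPart Sum.inl) h
  · simpa using congrArg (rowPart Sum.inr) h

lemma twist_joinRows (a : ZMod 2) :
    twist a (joinRows A B) = joinRows (twist a A) (twist a B) := by
  ext ⟨a | b, x⟩ <;> rfl

lemma through_joinRows (hA : A.Nonempty) (hB : B.Nonempty) : Through (joinRows A B) :=
  ⟨⟨hA.some.1, hA.some.2, hA.some_mem⟩, ⟨hB.some.1, hB.some.2, hB.some_mem⟩⟩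

end Rows

section ThroughClasses
variable {α β : Type*}

def ThroughClasses (d : Setoid ((α ⊕ β) × ZMod 2)) : Set (Set ((α ⊕ β) × ZMod 2)) :=
  {C | C ∈ d.classes ∧ Through C}

def NonInvThrough (d : Setoid ((α ⊕ β) × ZMod 2)) : Set (Set ((α ⊕ β) × ZMod 2)) :=
  {C | C ∈ d.classes ∧ Through C ∧ gAct '' C ≠ C}

def InvThrough (d : Setoid ((α ⊕ β) × ZMod 2)) : Set (Set ((α ⊕ β) × ZMod 2)) :=
  {C | C ∈ d.classes ∧ Through C ∧ gAct '' C = C}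

variable {d d' : Setoid ((α ⊕ β) × ZMod 2)} {C : Set ((α ⊕ β) × ZMod 2)}

lemma mem_nonInvThrough : C ∈ NonInvThrough d ↔ C ∈ ThroughClasses d ∧ twist 1 C ≠ C := by
  rw [← image_gAct]
  exact and_assoc.symm

lemma mem_invThrough : C ∈ InvThrough d ↔ C ∈ ThroughClasses d ∧ twist 1 C = C := by
  rw [← image_gAct]
  exact and_assoc.symm

lemma Setoid.rel_inl_inr_iff {a : α} {b : β} {x y : ZMod 2} :
    d (Sum.inl a, x) (Sum.inr b, y) ↔
      ∃ C ∈ ThroughClasses d, (Sum.inl a, x) ∈ C ∧ (Sum.inr b, y) ∈ C := by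
  rw [Setoid.rel_iff_exists_classes]
  exact ⟨fun ⟨C, hC, ha, hb⟩ => ⟨C, ⟨hC, ⟨a, x, ha⟩, ⟨b, y, hb⟩⟩, ha, hb⟩,
    fun ⟨C, hC, ha, hb⟩ => ⟨C, hC.1, ha, hb⟩⟩

lemma Setoid.eq_of_throughClasses_eq (htop : rowSetoid Sum.inl d = rowSetoid Sum.inl d')
    (hbot : rowSetoid Sum.inr d = rowSetoid Sum.inr d')
    (hthrough : ThroughClasses d = ThroughClasses d') : d = d' := by
  ext ⟨a | b, x⟩ ⟨a' | b', y⟩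
  · exact Setoid.ext_iff.1 htop (a, x) (a', y)
  · rw [Setoid.rel_inl_inr_iff, Setoid.rel_inl_inr_iff, hthrough]
  · rw [Setoid.comm', Setoid.rel_inl_inr_iff, Setoid.comm' d', Setoid.rel_inl_inr_iff, hthrough]
  · exact Setoid.ext_iff.1 hbot (b, x) (b', y)

lemma through_twist (a : ZMod 2) (h : Through C) : Through (twist a C) := by
  obtain ⟨⟨x, u, hx⟩, ⟨y, v, hy⟩⟩ := h
  exact ⟨⟨x, a + u, by simpa using hx⟩, ⟨y, a + v, by simpa using hy⟩⟩

lemma rowPart_inl_nonempty (h : Through C) : (rowPart Sum.inl C).Nonempty :=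
  let ⟨⟨a, x, ha⟩, _⟩ := h
  ⟨(a, x), ha⟩

lemma rowPart_inr_nonempty (h : Through C) : (rowPart Sum.inr C).Nonempty :=
  let ⟨_, ⟨b, y, hb⟩⟩ := h
  ⟨(b, y), hb⟩

end ThroughClasses

abbrev Conn (s1 s2 : ℕ) := ((Fin s1 → ZMod 2) × Equiv.Perm (Fin s1)) × Equiv.Perm (Fin s2)

section Glue
variable {k s1 s2 : ℕ} (M1 : MData k s1 s2) (c : Conn s1 s2) (M2 : MData k s1 s2)

/-- The glued relation between the top vertex `p` and the bottom vertex `q`. -/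
def cross (p q : Fin k × ZMod 2) : Prop :=
  (∃ i a, p ∈ twist a (M1.pairRep i) ∧ q ∈ twist (a + c.1.1 i) (M2.pairRep (c.1.2 i))) ∨
    ∃ l, p ∈ M1.invCl l ∧ q ∈ M2.invCl (c.2 l)

variable {M1 c M2} {p p' q q' : Fin k × ZMod 2}

lemma cross_iff_of_mem_twist_pairRep {i : Fin s1} {a : ZMod 2} (hp : p ∈ twist a (M1.pairRep i)) :
    cross M1 c M2 p q ↔ q ∈ twist (a + c.1.1 i) (M2.pairRep (c.1.2 i)) := by
  refine ⟨?_, fun hq => Or.inl ⟨i, a, hp, hq⟩⟩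
  rintro (⟨i', a', hp', hq⟩ | ⟨l, hl, -⟩)
  · obtain ⟨rfl, rfl⟩ := MData.eq_of_mem_twist_pairRep hp' hp
    exact hq
  · exact absurd hl (MData.not_mem_invCl_of_mem_twist_pairRep hp l)

lemma cross_iff_of_mem_invCl {l : Fin s2} (hp : p ∈ M1.invCl l) :
    cross M1 c M2 p q ↔ q ∈ M2.invCl (c.2 l) := by
  refine ⟨?_, fun hq => Or.inr ⟨l, hp, hq⟩⟩
  rintro (⟨i, a, hi, -⟩ | ⟨l', hl', hq⟩)
  · exact absurd hp (MData.not_mem_invCl_of_mem_twist_pairRep hi l)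
  · rwa [MData.eq_of_mem_invCl hp hl']

lemma cross_of_rel_left (h : M1.d p p') (hc : cross M1 c M2 p' q) : cross M1 c M2 p q := by
  rcases hc with ⟨i, a, hp, hq⟩ | ⟨l, hp, hq⟩
  · exact Or.inl ⟨i, a,
      Setoid.mem_of_mem_classes_of_rel (M1.twist_pairRep_mem_classes i a) hp h, hq⟩
  · exact Or.inr ⟨l, Setoid.mem_of_mem_classes_of_rel (M1.invCl_mem l) hp h, hq⟩

lemma cross_of_rel_right (hc : cross M1 c M2 p q) (h : M2.d q q') : cross M1 c M2 p q' := by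
  rcases hc with ⟨i, a, hp, hq⟩ | ⟨l, hp, hq⟩
  · exact Or.inl ⟨i, a, hp, Setoid.mem_of_mem_classes_of_rel
      (M2.twist_pairRep_mem_classes _ _) hq (M2.d.symm h)⟩
  · exact Or.inr ⟨l, hp, Setoid.mem_of_mem_classes_of_rel (M2.invCl_mem _) hq (M2.d.symm h)⟩

lemma rel_left_of_cross (h : cross M1 c M2 p q) (h' : cross M1 c M2 p' q) : M1.d p p' := by
  rcases h with ⟨i, a, hp, hq⟩ | ⟨l, hp, hq⟩ <;>
    rcases h' with ⟨i', a', hp', hq'⟩ | ⟨l', hp', hq'⟩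
  · obtain ⟨ha, hi⟩ := MData.eq_of_mem_twist_pairRep hq hq'
    obtain rfl := c.1.2.injective hi
    obtain rfl := add_right_cancel ha
    exact Setoid.rel_of_mem_classes (M1.twist_pairRep_mem_classes i a) hp hp'
  · exact absurd hq' (MData.not_mem_invCl_of_mem_twist_pairRep hq _)
  · exact absurd hq (MData.not_mem_invCl_of_mem_twist_pairRep hq' _)
  · obtain rfl := c.2.injective (MData.eq_of_mem_invCl hq hq')
    exact Setoid.rel_of_mem_classes (M1.invCl_mem l) hp hp'

lemma rel_right_of_cross (h : cross M1 c M2 p q) (h' : cross M1 c M2 p q') : M2.d q q' := by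
  rcases h with ⟨i, a, hp, hq⟩ | ⟨l, hp, hq⟩
  · rw [cross_iff_of_mem_twist_pairRep hp] at h'
    exact Setoid.rel_of_mem_classes (M2.twist_pairRep_mem_classes _ _) hq h'
  · rw [cross_iff_of_mem_invCl hp] at h'
    exact Setoid.rel_of_mem_classes (M2.invCl_mem _) hq h'

lemma cross_twist (g : ZMod 2) (hc : cross M1 c M2 p q) :
    cross M1 c M2 (p.1, g + p.2) (q.1, g + q.2) := by
  have shift : ∀ {a : ZMod 2} {S : Set (Fin k × ZMod 2)} {r : Fin k × ZMod 2},
      r ∈ twist a S → (r.1, g + r.2) ∈ twist (a + g) S := by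
    intro a S r hr
    simpa [add_assoc, add_left_comm g] using hr
  rcases hc with ⟨i, a, hp, hq⟩ | ⟨l, hp, hq⟩
  · refine Or.inl ⟨i, a + g, shift hp, ?_⟩
    rw [add_right_comm]
    exact shift hq
  · refine Or.inr ⟨l, ?_, ?_⟩
    · show p ∈ twist g (M1.invCl l)
      rwa [MData.twist_invCl]
    · show q ∈ twist g (M2.invCl (c.2 l))
      rwa [MData.twist_invCl]

variable (M1 c M2)

def glueRel : (Fin k ⊕ Fin k) × ZMod 2 → (Fin k ⊕ Fin k) × ZMod 2 → Prop
  | (Sum.inl p, x), (Sum.inl q, y) => M1.d (p, x) (q, y)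
  | (Sum.inl p, x), (Sum.inr q, y) => cross M1 c M2 (p, x) (q, y)
  | (Sum.inr p, x), (Sum.inl q, y) => cross M1 c M2 (q, y) (p, x)
  | (Sum.inr p, x), (Sum.inr q, y) => M2.d (p, x) (q, y)

def glue : Setoid ((Fin k ⊕ Fin k) × ZMod 2) where
  r := glueRel M1 c M2
  iseqv := by
    refine ⟨?_, ?_, ?_⟩
    · rintro ⟨p | p, x⟩
      · exact M1.d.refl _
      · exact M2.d.refl _
    · rintro ⟨p | p, x⟩ ⟨q | q, y⟩ h
      · exact M1.d.symm h
      · exact h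
      · exact h
      · exact M2.d.symm h
    · rintro ⟨p | p, x⟩ ⟨q | q, y⟩ ⟨r | r, z⟩ h1 h2
      · exact M1.d.trans h1 h2
      · exact cross_of_rel_left h1 h2
      · exact rel_left_of_cross h1 h2
      · exact cross_of_rel_right h1 h2
      · exact cross_of_rel_left (M1.d.symm h2) h1
      · exact rel_right_of_cross h1 h2
      · exact cross_of_rel_right h2 (M2.d.symm h1)
      · exact M2.d.trans h1 h2

lemma glue_isStable : IsStable (glue M1 c M2) := by
  rintro g ⟨p | p, x⟩ ⟨q | q, y⟩ h
  · exact M1.stable g (p, x) (q, y) h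
  · exact cross_twist g h
  · exact cross_twist g h
  · exact M2.stable g (p, x) (q, y) h

end Glue

section GlueClasses
variable {k s1 s2 : ℕ} (M1 : MData k s1 s2) (c : Conn s1 s2) (M2 : MData k s1 s2)

def pairClass (i : Fin s1) (a : ZMod 2) : Set ((Fin k ⊕ Fin k) × ZMod 2) :=
  joinRows (twist a (M1.pairRep i)) (twist (a + c.1.1 i) (M2.pairRep (c.1.2 i)))

def invClass (l : Fin s2) : Set ((Fin k ⊕ Fin k) × ZMod 2) :=
  joinRows (M1.invCl l) (M2.invCl (c.2 l))

def gluedThroughClasses : Set (Set ((Fin k ⊕ Fin k) × ZMod 2)) :=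
  range (uncurry (pairClass M1 c M2)) ∪ range (invClass M1 c M2)

variable {M1 c M2}

lemma twist_pairClass (b : ZMod 2) (i : Fin s1) (a : ZMod 2) :
    twist b (pairClass M1 c M2 i a) = pairClass M1 c M2 i (b + a) := by
  simp [pairClass, twist_joinRows, add_assoc]

@[simp] lemma twist_invClass (b : ZMod 2) (l : Fin s2) :
    twist b (invClass M1 c M2 l) = invClass M1 c M2 l := by
  simp [invClass, twist_joinRows]

lemma pairClass_injective : Injective (uncurry (pairClass M1 c M2)) := by
  rintro ⟨i, a⟩ ⟨i', a'⟩ h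
  obtain ⟨rfl, rfl⟩ := M1.twist_pairRep_inj.1 (joinRows_inj.1 h).1
  rfl

lemma invClass_injective : Injective (invClass M1 c M2) :=
  fun _ _ h => M1.invCl_injective (joinRows_inj.1 h).1

lemma twist_one_pairClass_ne (i : Fin s1) (a : ZMod 2) :
    twist 1 (pairClass M1 c M2 i a) ≠ pairClass M1 c M2 i a := by
  rw [twist_pairClass]
  intro h
  have := congrArg Prod.snd (pairClass_injective h : (i, 1 + a) = (i, a))
  exact one_ne_zero (add_eq_right.1 this)

lemma glue_class_eq_pairClass {i : Fin s1} {a : ZMod 2} {p : Fin k × ZMod 2}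
    (hp : p ∈ twist a (M1.pairRep i)) :
    {w | glue M1 c M2 w (Sum.inl p.1, p.2)} = pairClass M1 c M2 i a := by
  ext ⟨q | q, y⟩
  · exact ⟨fun h => Setoid.mem_of_mem_classes_of_rel (M1.twist_pairRep_mem_classes i a) hp h,
      fun h => Setoid.rel_of_mem_classes (M1.twist_pairRep_mem_classes i a) h hp⟩
  · exact cross_iff_of_mem_twist_pairRep hp

lemma glue_class_eq_invClass {l : Fin s2} {p : Fin k × ZMod 2} (hp : p ∈ M1.invCl l) :
    {w | glue M1 c M2 w (Sum.inl p.1, p.2)} = invClass M1 c M2 l := by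
  ext ⟨q | q, y⟩
  · exact ⟨fun h => Setoid.mem_of_mem_classes_of_rel (M1.invCl_mem l) hp h,
      fun h => Setoid.rel_of_mem_classes (M1.invCl_mem l) h hp⟩
  · exact cross_iff_of_mem_invCl hp

lemma pairClass_mem_throughClasses (i : Fin s1) (a : ZMod 2) :
    pairClass M1 c M2 i a ∈ ThroughClasses (glue M1 c M2) := by
  obtain ⟨p, hp⟩ := Setoid.nonempty_of_mem_classes (M1.twist_pairRep_mem_classes i a)
  exact ⟨⟨_, (glue_class_eq_pairClass hp).symm⟩, through_joinRows ⟨p, hp⟩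
    (Setoid.nonempty_of_mem_classes (M2.twist_pairRep_mem_classes _ _))⟩

lemma invClass_mem_throughClasses (l : Fin s2) :
    invClass M1 c M2 l ∈ ThroughClasses (glue M1 c M2) := by
  obtain ⟨p, hp⟩ := Setoid.nonempty_of_mem_classes (M1.invCl_mem l)
  exact ⟨⟨_, (glue_class_eq_invClass hp).symm⟩, through_joinRows ⟨p, hp⟩
    (Setoid.nonempty_of_mem_classes (M2.invCl_mem _))⟩

lemma throughClasses_glue : ThroughClasses (glue M1 c M2) = gluedThroughClasses M1 c M2 := by
  ext C
  refine ⟨?_, ?_⟩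
  · rintro ⟨hC, ⟨a, x, ha⟩, ⟨b, y, hb⟩⟩
    have hcross : cross M1 c M2 (a, x) (b, y) := Setoid.rel_of_mem_classes hC hb ha
    rw [Setoid.eq_setOf_rel_of_mem_classes hC ha]
    rcases hcross with ⟨i, a', hp, -⟩ | ⟨l, hp, -⟩
    · exact Or.inl ⟨(i, a'), (glue_class_eq_pairClass hp).symm⟩
    · exact Or.inr ⟨l, (glue_class_eq_invClass hp).symm⟩
  · rintro (⟨⟨i, a⟩, rfl⟩ | ⟨l, rfl⟩)
    · exact pairClass_mem_throughClasses i a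
    · exact invClass_mem_throughClasses l

lemma nonInvThrough_glue : NonInvThrough (glue M1 c M2) = range (uncurry (pairClass M1 c M2)) := by
  ext C
  rw [mem_nonInvThrough, throughClasses_glue]
  refine ⟨?_, ?_⟩
  · rintro ⟨⟨ia, rfl⟩ | ⟨l, rfl⟩, h⟩
    · exact ⟨ia, rfl⟩
    · exact absurd (twist_invClass 1 l) h
  · rintro ⟨⟨i, a⟩, rfl⟩
    exact ⟨Or.inl ⟨_, rfl⟩, twist_one_pairClass_ne i a⟩

lemma invThrough_glue : InvThrough (glue M1 c M2) = range (invClass M1 c M2) := by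
  ext C
  rw [mem_invThrough, throughClasses_glue]
  refine ⟨?_, ?_⟩
  · rintro ⟨⟨⟨i, a⟩, rfl⟩ | ⟨l, rfl⟩, h⟩
    · exact absurd h (twist_one_pairClass_ne i a)
    · exact ⟨l, rfl⟩
  · rintro ⟨l, rfl⟩
    exact ⟨Or.inr ⟨_, rfl⟩, twist_invClass 1 l⟩

lemma isDiagram_glue : IsDiagram k s1 s2 (glue M1 c M2) := by
  refine ⟨glue_isStable M1 c M2, ?_, ?_⟩
  · change Nat.card (NonInvThrough _) = _
    rw [nonInvThrough_glue, Nat.card_range_of_injective pairClass_injective]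
    simp [mul_comm]
  · change Nat.card (InvThrough _) = _
    rw [invThrough_glue, Nat.card_range_of_injective invClass_injective]
    simp

end GlueClasses

section RowData
variable {k s1 s2 : ℕ}

def rowPairReps (d : Setoid ((Fin k ⊕ Fin k) × ZMod 2)) (ρ : Fin k → Fin k ⊕ Fin k) :
    Set (Set (Fin k × ZMod 2)) :=
  {T | T ∈ rowPart ρ '' NonInvThrough d ∧ IsNormalized T}

def rowInvParts (d : Setoid ((Fin k ⊕ Fin k) × ZMod 2)) (ρ : Fin k → Fin k ⊕ Fin k) :
    Set (Set (Fin k × ZMod 2)) :=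
  rowPart ρ '' InvThrough d

def MData.IsRowData (M : MData k s1 s2) (d : Setoid ((Fin k ⊕ Fin k) × ZMod 2))
    (ρ : Fin k → Fin k ⊕ Fin k) : Prop :=
  M.d = rowSetoid ρ d ∧ range M.pairRep = rowPairReps d ρ ∧ range M.invCl = rowInvParts d ρ

lemma MData.IsRowData.unique {d : Setoid ((Fin k ⊕ Fin k) × ZMod 2)}
    {ρ : Fin k → Fin k ⊕ Fin k} {M M' : MData k s1 s2} (h : M.IsRowData d ρ)
    (h' : M'.IsRowData d ρ) : M = M' :=
  MData.ext (h.1.trans h'.1.symm)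
    (eq_of_strictMono_comp_of_range_eq minV M.pairRep_mono M'.pairRep_mono
      (h.2.1.trans h'.2.1.symm))
    (eq_of_strictMono_comp_of_range_eq minV M.invCl_mono M'.invCl_mono
      (h.2.2.trans h'.2.2.symm))

lemma MData.setOf_isNormalized_mem_range_twist (M : MData k s1 s2) :
    {T | T ∈ range (fun ia : Fin s1 × ZMod 2 => twist ia.2 (M.pairRep ia.1)) ∧
      IsNormalized T} = range M.pairRep := by
  ext T
  refine ⟨?_, ?_⟩
  · rintro ⟨⟨⟨i, a⟩, rfl⟩, hn⟩
    obtain rfl := M.stable.eq_zero_of_isNormalized_twist (M.pairRep_mem i)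
      (M.twist_one_pairRep_ne i) (M.pairRep_norm i) hn
    exact ⟨i, (twist_zero _).symm⟩
  · rintro ⟨i, rfl⟩
    exact ⟨⟨(i, 0), twist_zero _⟩, M.pairRep_norm i⟩

variable {M1 M2 : MData k s1 s2} {c : Conn s1 s2}

lemma isRowData_inl_glue : M1.IsRowData (glue M1 c M2) Sum.inl := by
  refine ⟨rfl, ?_, ?_⟩
  · rw [rowPairReps, nonInvThrough_glue, ← range_comp, ← M1.setOf_isNormalized_mem_range_twist]
    rfl
  · rw [rowInvParts, invThrough_glue, ← range_comp]
    rfl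

lemma isRowData_inr_glue : M2.IsRowData (glue M1 c M2) Sum.inr := by
  refine ⟨rfl, ?_, ?_⟩
  · have hsurj : Surjective fun ia : Fin s1 × ZMod 2 => (c.1.2 ia.1, ia.2 + c.1.1 ia.1) := by
      intro jb
      refine ⟨(c.1.2.symm jb.1, jb.2 + c.1.1 (c.1.2.symm jb.1)), ?_⟩
      simp
    rw [rowPairReps, nonInvThrough_glue, ← range_comp, ← M2.setOf_isNormalized_mem_range_twist,
      ← hsurj.range_comp]
    rfl
  · rw [rowInvParts, invThrough_glue, ← range_comp, ← c.2.surjective.range_comp]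
    rfl

lemma conn_eq_of_glue_eq {c c' : Conn s1 s2} (h : glue M1 c M2 = glue M1 c' M2) : c = c' := by
  have hpair : ∀ i, c.1.1 i = c'.1.1 i ∧ c.1.2 i = c'.1.2 i := by
    intro i
    obtain ⟨p, hp⟩ := Setoid.nonempty_of_mem_classes (M1.twist_pairRep_mem_classes i 0)
    have hcl := glue_class_eq_pairClass (c := c) (M2 := M2) hp
    rw [h, glue_class_eq_pairClass hp] at hcl
    simpa using M2.twist_pairRep_inj.1 (joinRows_inj.1 hcl).2.symm
  have hinv : ∀ l, c.2 l = c'.2 l := by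
    intro l
    obtain ⟨p, hp⟩ := Setoid.nonempty_of_mem_classes (M1.invCl_mem l)
    have hcl := glue_class_eq_invClass (c := c) (M2 := M2) hp
    rw [h, glue_class_eq_invClass hp] at hcl
    exact M2.invCl_injective (joinRows_inj.1 hcl).2.symm
  exact Prod.ext (Prod.ext (funext fun i => (hpair i).1) (Equiv.ext fun i => (hpair i).2))
    (Equiv.ext hinv)

lemma glue_injective :
    Injective fun t : MData k s1 s2 × Conn s1 s2 × MData k s1 s2 => glue t.1 t.2.1 t.2.2 := by
  rintro ⟨M1, c, M2⟩ ⟨M1', c', M2'⟩ h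
  dsimp only at h
  have h1 : M1'.IsRowData (glue M1 c M2) Sum.inl := h ▸ isRowData_inl_glue
  have h2 : M2'.IsRowData (glue M1 c M2) Sum.inr := h ▸ isRowData_inr_glue
  obtain rfl := isRowData_inl_glue.unique h1
  obtain rfl := isRowData_inr_glue.unique h2
  rw [conn_eq_of_glue_eq h]

end RowData

section Restriction
variable {k s1 s2 : ℕ} {d : Setoid ((Fin k ⊕ Fin k) × ZMod 2)} {ρ : Fin k → Fin k ⊕ Fin k}
  {C C' : Set ((Fin k ⊕ Fin k) × ZMod 2)}

lemma rowPart_mem_classes (hC : C ∈ d.classes) (hne : (rowPart ρ C).Nonempty) :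
    rowPart ρ C ∈ (rowSetoid ρ d).classes := by
  obtain ⟨p, hp⟩ := hne
  refine ⟨p, ?_⟩
  rw [Setoid.eq_setOf_rel_of_mem_classes hC hp]
  rfl

lemma eq_of_rowPart_eq (hC : C ∈ d.classes) (hC' : C' ∈ d.classes)
    (hne : (rowPart ρ C).Nonempty) (h : rowPart ρ C = rowPart ρ C') : C = C' := by
  obtain ⟨p, hp⟩ := hne
  exact Setoid.eq_of_mem_classes hC hp hC' (h ▸ hp : p ∈ rowPart ρ C')

lemma injOn_rowPart (hρ : ∀ C, Through C → (rowPart ρ C).Nonempty) :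
    InjOn (rowPart ρ) (ThroughClasses d) :=
  fun _ hC _ hC' h => eq_of_rowPart_eq hC.1 hC'.1 (hρ _ hC.2) h

lemma IsStable.twist_mem_nonInvThrough (hd : IsStable d) (hC : C ∈ NonInvThrough d)
    (a : ZMod 2) : twist a C ∈ NonInvThrough d := by
  obtain ⟨⟨hC, hT⟩, h1⟩ := mem_nonInvThrough.1 hC
  refine mem_nonInvThrough.2
    ⟨⟨hd.twist_mem_classes hC a, through_twist a hT⟩, fun h => h1 ?_⟩
  rw [twist_twist, add_comm, ← twist_twist] at h
  exact twist_injective a h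

lemma IsStable.twist_one_rowPart_ne (hd : IsStable d)
    (hρ : ∀ C, Through C → (rowPart ρ C).Nonempty) (hC : C ∈ NonInvThrough d) :
    twist 1 (rowPart ρ C) ≠ rowPart ρ C := by
  obtain ⟨⟨hC, hT⟩, h1⟩ := mem_nonInvThrough.1 hC
  rw [← rowPart_twist]
  intro h
  exact h1 (eq_of_rowPart_eq (hd.twist_mem_classes hC 1) hC (h ▸ hρ C hT) h)

lemma IsStable.card_nonInvThrough (hd : IsStable d)
    (hρ : ∀ C, Through C → (rowPart ρ C).Nonempty) :
    Nat.card (NonInvThrough d) = 2 * Nat.card (rowPairReps d ρ) := by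
  rw [← Nat.card_image_of_injOn ((injOn_rowPart hρ).mono fun _ hC => (mem_nonInvThrough.1 hC).1)]
  refine (hd.rowSetoid ρ).card_eq_two_mul_card_isNormalized ?_ ?_
  · rintro _ ⟨C, hC, rfl⟩
    exact ⟨rowPart_mem_classes hC.1 (hρ C hC.2.1), hd.twist_one_rowPart_ne hρ hC⟩
  · rintro _ ⟨C, hC, rfl⟩ a
    exact ⟨twist a C, hd.twist_mem_nonInvThrough hC a, rfl⟩

lemma card_invThrough (hρ : ∀ C, Through C → (rowPart ρ C).Nonempty) :
    Nat.card (InvThrough d) = Nat.card (rowInvParts d ρ) :=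
  (Nat.card_image_of_injOn ((injOn_rowPart hρ).mono fun _ hC => (mem_invThrough.1 hC).1)).symm

lemma exists_isRowData (hd : IsDiagram k s1 s2 d)
    (hρ : ∀ C, Through C → (rowPart ρ C).Nonempty) :
    ∃ M : MData k s1 s2, M.IsRowData d ρ := by
  obtain ⟨hst, hNI, hIV⟩ := hd
  have hpair : ∀ T ∈ rowPairReps d ρ,
      T ∈ (rowSetoid ρ d).classes ∧ twist 1 T ≠ T ∧ IsNormalized T := by
    rintro _ ⟨⟨C, hC, rfl⟩, hn⟩
    exact ⟨rowPart_mem_classes hC.1 (hρ C hC.2.1), hst.twist_one_rowPart_ne hρ hC, hn⟩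
  have hinv : ∀ T ∈ rowInvParts d ρ, T ∈ (rowSetoid ρ d).classes ∧ twist 1 T = T := by
    rintro _ ⟨C, hC, rfl⟩
    obtain ⟨⟨hC, hT⟩, h1⟩ := mem_invThrough.1 hC
    exact ⟨rowPart_mem_classes hC (hρ C hT), by rw [← rowPart_twist, h1]⟩
  have hcard1 : Nat.card (rowPairReps d ρ) = s1 := by
    have : 2 * s1 = 2 * Nat.card (rowPairReps d ρ) := hNI.symm.trans (hst.card_nonInvThrough hρ)
    omega
  obtain ⟨P, hPmono, hP⟩ := exists_strictMono_comp_range_eq minV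
    (fun T hT T' hT' h => (hpair T hT).2.2.eq_of_minV_eq (hpair T' hT').2.2 (hpair T hT).1
      (hpair T' hT').1 h) hcard1
  have hnorm : ∀ T ∈ rowInvParts d ρ, IsNormalized T := fun T hT =>
    isNormalized_of_twist_one_eq (Setoid.nonempty_of_mem_classes (hinv T hT).1) (hinv T hT).2
  obtain ⟨Q, hQmono, hQ⟩ := exists_strictMono_comp_range_eq minV
    (fun T hT T' hT' h => (hnorm T hT).eq_of_minV_eq (hnorm T' hT') (hinv T hT).1
      (hinv T' hT').1 h) ((card_invThrough hρ).symm.trans hIV)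
  have hPmem : ∀ i, P i ∈ rowPairReps d ρ := fun i => hP ▸ mem_range_self i
  have hQmem : ∀ l, Q l ∈ rowInvParts d ρ := fun l => hQ ▸ mem_range_self l
  refine ⟨⟨rowSetoid ρ d, hst.rowSetoid ρ, P, fun i => (hpair _ (hPmem i)).1,
    fun i => ?_, fun i => (hpair _ (hPmem i)).2.2, hPmono, Q, fun l => (hinv _ (hQmem l)).1,
    fun l => ?_, hQmono⟩, rfl, hP, hQ⟩
  · rw [image_gAct]
    exact (hpair _ (hPmem i)).2.1
  · rw [image_gAct]
    exact (hinv _ (hQmem l)).2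

end Restriction

section Surjectivity
variable {k s1 s2 : ℕ} {d : Setoid ((Fin k ⊕ Fin k) × ZMod 2)} {ρ : Fin k → Fin k ⊕ Fin k}
  {M M1 M2 : MData k s1 s2} {C : Set ((Fin k ⊕ Fin k) × ZMod 2)}

namespace MData.IsRowData

lemma exists_pairRep_eq_rowPart (hM : M.IsRowData d ρ) (i : Fin s1) :
    ∃ C ∈ NonInvThrough d, rowPart ρ C = M.pairRep i :=
  (hM.2.1 ▸ mem_range_self i : M.pairRep i ∈ rowPairReps d ρ).1

lemma exists_invCl_eq_rowPart (hM : M.IsRowData d ρ) (l : Fin s2) :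
    ∃ C ∈ InvThrough d, rowPart ρ C = M.invCl l :=
  (hM.2.2 ▸ mem_range_self l : M.invCl l ∈ rowInvParts d ρ)

lemma exists_rowPart_eq_twist_pairRep (hM : M.IsRowData d ρ) (hd : IsStable d)
    (hρ : ∀ C, Through C → (rowPart ρ C).Nonempty) (hC : C ∈ NonInvThrough d) :
    ∃ i b, rowPart ρ C = twist b (M.pairRep i) := by
  obtain ⟨b, hb⟩ := exists_isNormalized_twist (hρ C (mem_nonInvThrough.1 hC).1.2)
  obtain ⟨i, hi⟩ : twist b (rowPart ρ C) ∈ range M.pairRep := by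
    rw [hM.2.1]
    exact ⟨⟨twist b C, hd.twist_mem_nonInvThrough hC b, rfl⟩, hb⟩
  exact ⟨i, b, by rw [hi, twist_twist_self]⟩

lemma exists_rowPart_eq_invCl (hM : M.IsRowData d ρ) (hC : C ∈ InvThrough d) :
    ∃ l, rowPart ρ C = M.invCl l := by
  obtain ⟨l, hl⟩ : rowPart ρ C ∈ range M.invCl := hM.2.2 ▸ mem_image_of_mem _ hC
  exact ⟨l, hl.symm⟩

end MData.IsRowData

lemma exists_pair_connection (hd : IsStable d) (h1 : M1.IsRowData d Sum.inl)
    (h2 : M2.IsRowData d Sum.inr) :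
    ∃ (f : Fin s1 → ZMod 2) (σ : Equiv.Perm (Fin s1)), ∀ i,
      joinRows (M1.pairRep i) (twist (f i) (M2.pairRep (σ i))) ∈ NonInvThrough d := by
  have key : ∀ i, ∃ j b,
      joinRows (M1.pairRep i) (twist b (M2.pairRep j)) ∈ NonInvThrough d := by
    intro i
    obtain ⟨C, hC, hCi⟩ := h1.exists_pairRep_eq_rowPart i
    obtain ⟨j, b, hj⟩ :=
      h2.exists_rowPart_eq_twist_pairRep hd (fun _ => rowPart_inr_nonempty) hC
    exact ⟨j, b, by rwa [← hCi, ← hj, joinRows_rowPart]⟩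
  choose σ f hσ using key
  have hσ_inj : Injective σ := by
    intro i i' h
    -- twisted by `f i + f i'`, the `i`-th class meets the `i'`-th one in the bottom row
    have hcl := hd.twist_mem_nonInvThrough (hσ i) (f i + f i')
    rw [twist_joinRows, twist_twist, add_right_comm, CharTwo.add_self_eq_zero, zero_add] at hcl
    obtain ⟨q, hq⟩ :=
      Setoid.nonempty_of_mem_classes (M2.twist_pairRep_mem_classes (σ i') (f i'))
    have heq := Setoid.eq_of_mem_classes (x := (Sum.inr q.1, q.2))
      (mem_nonInvThrough.1 hcl).1.1 (by rwa [h]) (mem_nonInvThrough.1 (hσ i')).1.1 hq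
    have htop := (joinRows_inj.1 heq).1
    rw [← twist_zero (M1.pairRep i')] at htop
    exact (M1.twist_pairRep_inj.1 htop).2
  exact ⟨f, Equiv.ofBijective σ (Finite.injective_iff_bijective.1 hσ_inj), hσ⟩

lemma exists_inv_connection (h1 : M1.IsRowData d Sum.inl) (h2 : M2.IsRowData d Sum.inr) :
    ∃ τ : Equiv.Perm (Fin s2), ∀ l,
      joinRows (M1.invCl l) (M2.invCl (τ l)) ∈ InvThrough d := by
  have key : ∀ l, ∃ m, joinRows (M1.invCl l) (M2.invCl m) ∈ InvThrough d := by
    intro l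
    obtain ⟨C, hC, hCl⟩ := h1.exists_invCl_eq_rowPart l
    obtain ⟨m, hm⟩ := h2.exists_rowPart_eq_invCl hC
    exact ⟨m, by rwa [← hCl, ← hm, joinRows_rowPart]⟩
  choose τ hτ using key
  have hτ_inj : Injective τ := by
    intro l l' h
    obtain ⟨q, hq⟩ := Setoid.nonempty_of_mem_classes (M2.invCl_mem (τ l'))
    have heq := Setoid.eq_of_mem_classes (x := (Sum.inr q.1, q.2))
      (mem_invThrough.1 (hτ l)).1.1 (by rwa [h]) (mem_invThrough.1 (hτ l')).1.1 hq
    exact M1.invCl_injective (joinRows_inj.1 heq).1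
  exact ⟨Equiv.ofBijective τ (Finite.injective_iff_bijective.1 hτ_inj), hτ⟩

lemma exists_glue_eq (hd : IsDiagram k s1 s2 d) :
    ∃ (M1 : MData k s1 s2) (c : Conn s1 s2) (M2 : MData k s1 s2), glue M1 c M2 = d := by
  obtain ⟨M1, h1⟩ := exists_isRowData hd fun _ => rowPart_inl_nonempty
  obtain ⟨M2, h2⟩ := exists_isRowData hd fun _ => rowPart_inr_nonempty
  obtain ⟨f, σ, hσ⟩ := exists_pair_connection hd.1 h1 h2
  obtain ⟨τ, hτ⟩ := exists_inv_connection h1 h2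
  refine ⟨M1, ((f, σ), τ), M2, Setoid.eq_of_throughClasses_eq h1.1 h2.1 ?_⟩
  have hpair : ∀ i a, pairClass M1 ((f, σ), τ) M2 i a ∈ NonInvThrough d := fun i a => by
    have := hd.1.twist_mem_nonInvThrough (hσ i) a
    rwa [twist_joinRows, twist_twist] at this
  have hinj := injOn_rowPart (d := d) fun _ => rowPart_inl_nonempty
  rw [throughClasses_glue]
  ext C
  refine ⟨?_, fun hC => ?_⟩
  · rintro (⟨⟨i, a⟩, rfl⟩ | ⟨l, rfl⟩)
    · exact (mem_nonInvThrough.1 (hpair i a)).1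
    · exact (mem_invThrough.1 (hτ l)).1
  by_cases h1C : twist 1 C = C
  · obtain ⟨l, hl⟩ := h1.exists_rowPart_eq_invCl (mem_invThrough.2 ⟨hC, h1C⟩)
    exact Or.inr ⟨l, hinj (mem_invThrough.1 (hτ l)).1 hC hl.symm⟩
  · obtain ⟨i, b, hi⟩ := h1.exists_rowPart_eq_twist_pairRep hd.1
      (fun _ => rowPart_inl_nonempty) (mem_nonInvThrough.2 ⟨hC, h1C⟩)
    exact Or.inl ⟨(i, b), hinj (mem_nonInvThrough.1 (hpair i b)).1 hC hi.symm⟩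

end Surjectivity

section GlueEquiv
variable {k s1 s2 : ℕ} {M1 M2 : MData k s1 s2} {c : Conn s1 s2} {p : Fin k × ZMod 2}

lemma mem_pairRep_iff_glue_rel {i : Fin s1} (hp : p ∈ M1.pairRep i) (q : Fin k × ZMod 2) :
    q ∈ M2.pairRep (c.1.2 i) ↔
      glue M1 c M2 (Sum.inl p.1, p.2) (Sum.inr q.1, c.1.1 i + q.2) := by
  rw [← twist_zero (M1.pairRep i)] at hp
  change _ ↔ cross M1 c M2 p _
  rw [cross_iff_of_mem_twist_pairRep hp, zero_add, mem_twist, CharTwo.add_cancel_left]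

lemma mem_invCl_iff_glue_rel {l : Fin s2} (hp : p ∈ M1.invCl l) (q : Fin k × ZMod 2) :
    q ∈ M2.invCl (c.2 l) ↔ glue M1 c M2 (Sum.inl p.1, p.2) (Sum.inr q.1, q.2) :=
  (cross_iff_of_mem_invCl hp).symm

variable (k s1 s2)

noncomputable def glueEquiv :
    MData k s1 s2 × Conn s1 s2 × MData k s1 s2 ≃ {d // IsDiagram k s1 s2 d} :=
  Equiv.ofBijective (fun t => ⟨glue t.1 t.2.1 t.2.2, isDiagram_glue⟩)
    ⟨fun _ _ h => glue_injective (congrArg Subtype.val h), fun ⟨_, hd⟩ =>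
      let ⟨M1, c, M2, h⟩ := exists_glue_eq hd
      ⟨(M1, c, M2), Subtype.ext h⟩⟩

end GlueEquiv

theorem stmt_12_general (k s1 s2 : ℕ) :
    ∃ Φ : {d : Setoid ((Fin k ⊕ Fin k) × ZMod 2) // IsDiagram k s1 s2 d} ≃
        MData k s1 s2 ×
          (((Fin s1 → ZMod 2) × Equiv.Perm (Fin s1)) × Equiv.Perm (Fin s2)) ×
          MData k s1 s2,
      ∀ d : {d : Setoid ((Fin k ⊕ Fin k) × ZMod 2) // IsDiagram k s1 s2 d},
        (∀ p q : Fin k × ZMod 2,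
          (Φ d).1.d.r p q ↔ d.val.r (Sum.inl p.1, p.2) (Sum.inl q.1, q.2)) ∧
        (∀ p q : Fin k × ZMod 2,
          (Φ d).2.2.d.r p q ↔ d.val.r (Sum.inr p.1, p.2) (Sum.inr q.1, q.2)) ∧
        (∀ i : Fin s1, ∀ p ∈ (Φ d).1.pairRep i, ∀ q : Fin k × ZMod 2,
          q ∈ (Φ d).2.2.pairRep ((Φ d).2.1.1.2 i) ↔
            d.val.r (Sum.inl p.1, p.2) (Sum.inr q.1, (Φ d).2.1.1.1 i + q.2)) ∧
        (∀ l : Fin s2, ∀ p ∈ (Φ d).1.invCl l, ∀ q : Fin k × ZMod 2,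
          q ∈ (Φ d).2.2.invCl ((Φ d).2.1.2 l) ↔
            d.val.r (Sum.inl p.1, p.2) (Sum.inr q.1, q.2)) := by
  refine ⟨(glueEquiv k s1 s2).symm, fun d => ?_⟩
  obtain ⟨⟨M1, c, M2⟩, rfl⟩ := (glueEquiv k s1 s2).surjective d
  rw [Equiv.symm_apply_apply]
  exact ⟨fun _ _ => Iff.rfl, fun _ _ => Iff.rfl, fun _ _ hp => mem_pairRep_iff_glue_rel hp,
    fun _ _ hp => mem_invCl_iff_glue_rel hp⟩

/-- the map sending a diagram `d ∈ I(k, s1, s2)` to its top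
restriction with through-class data `(d⁺, P)`, its bottom restriction with
through-class data `(d⁻, Q)`, and the group element `((f, σ1), σ2)` recording how
the through classes of `d` connect the top data to the bottom data, is a bijection
`I(k, s1, s2) ≃ M[(r,(s1,s2))] × ((Fin s1 → ZMod 2) ⋊ S_{s1}) × S_{s2} × M[(r,(s1,s2))]`.
Writing `Φ d = (Mt, ((f, σ1), σ2), Mb)`, the characterizing properties are:
`Mt.d` (resp. `Mb.d`) is the restriction of `d` to the top (resp. bottom) row; for
each `i : Fin s1` the through class of `d` containing the `i`-th chosen top class
pair meets the bottom row in the `σ1 i`-th chosen bottom class pair with twist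
`f i`; and for each `l : Fin s2` the through class containing the `l`-th chosen
`g`-invariant top class contains the `σ2 l`-th chosen `g`-invariant bottom class. -/
theorem stmt_12 (k s1 s2 : ℕ) (h : 2 * s1 + s2 ≤ 2 * k) :
    ∃ Φ : {d : Setoid ((Fin k ⊕ Fin k) × ZMod 2) // IsDiagram k s1 s2 d} ≃
        MData k s1 s2 ×
          (((Fin s1 → ZMod 2) × Equiv.Perm (Fin s1)) × Equiv.Perm (Fin s2)) ×
          MData k s1 s2,
      ∀ d : {d : Setoid ((Fin k ⊕ Fin k) × ZMod 2) // IsDiagram k s1 s2 d},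
        (∀ p q : Fin k × ZMod 2,
          (Φ d).1.d.r p q ↔ d.val.r (Sum.inl p.1, p.2) (Sum.inl q.1, q.2)) ∧
        (∀ p q : Fin k × ZMod 2,
          (Φ d).2.2.d.r p q ↔ d.val.r (Sum.inr p.1, p.2) (Sum.inr q.1, q.2)) ∧
        (∀ i : Fin s1, ∀ p ∈ (Φ d).1.pairRep i, ∀ q : Fin k × ZMod 2,
          q ∈ (Φ d).2.2.pairRep ((Φ d).2.1.1.2 i) ↔
            d.val.r (Sum.inl p.1, p.2) (Sum.inr q.1, (Φ d).2.1.1.1 i + q.2)) ∧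
        (∀ l : Fin s2, ∀ p ∈ (Φ d).1.invCl l, ∀ q : Fin k × ZMod 2,
          q ∈ (Φ d).2.2.invCl ((Φ d).2.1.2 l) ↔
            d.val.r (Sum.inl p.1, p.2) (Sum.inr q.1, q.2)) :=
  stmt_12_general k s1 s2
end
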